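/- arXiv:1712.03867 — 3 statements merged into one kernel-verified Lean document; each statement's English description precedes it below -/
import Mathlib

section
/- Let $\lambda \in \mathbb{N}$, $\lambda \geq 1$, and let $f, g : \mathbb{T}^d \to \mathbb{R}$ be smooth functions, where $\mathbb{T}^d$ is the $d$-dimensional flat torus. For every $p \in [1,\infty)$ there is a constant $C_p$ (depending only on $p$ and $d$) such that $\big| \|f \cdot g(\lambda \cdot)\|_{L^p(\mathbb{T}^d)} - \|f\|_{L^p(\mathbb{T}^d)} \|g\|_{L^p(\mathbb{T}^d)} \big| \leq C_p \lambda^{-1/p} \|f\|_{C^1(\mathbb{T}^d)} \|g\|_{L^p(\mathbb{T}^d)}$, where $g(\lambda \cdot)$ denotes the $1/\lambda$-periodic function $x \mapsto g(\lambda x)$. -/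
open MeasureTheory
open scoped ENNReal NNReal BigOperators

noncomputable section

/-- Points of `ℝ^d`; periodic functions on it model functions on the torus `𝕋^d`. -/
abbrev Vec (d : ℕ) := Fin d → ℝ

/-- The fundamental domain `[0,1)^d` of the torus. -/
def cube (d : ℕ) : Set (Vec d) := Set.univ.pi fun _ => Set.Ico (0:ℝ) 1

/-- `f` is `ℤ^d`-periodic, i.e. descends to the flat torus `𝕋^d = ℝ^d/ℤ^d`. -/
def IsPeriodic {d : ℕ} {E : Type*} (f : Vec d → E) : Prop :=
  ∀ (x : Vec d) (n : Fin d → ℤ), f (x + fun i => (n i : ℝ)) = f x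

/-- The `L^p` norm (finite `p`) on the torus, computed on the fundamental domain. -/
def lpNorm (d : ℕ) (p : ℝ) (f : Vec d → ℝ) : ℝ :=
  (∫ x in cube d, |f x| ^ p) ^ (1 / p)

/-- The `C^1` norm on the torus: sup of `|f|` and of `‖Df‖`. -/
def c1Norm (d : ℕ) (f : Vec d → ℝ) : ℝ :=
  ⨆ x : Vec d, max |f x| ‖fderiv ℝ f x‖

/-! ### Auxiliary lemmas -/

lemma measurableSet_cube (d : ℕ) : MeasurableSet (cube d) :=
  MeasurableSet.univ_pi fun _ => measurableSet_Ico

lemma volume_cube (d : ℕ) : volume (cube d) = 1 := by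
  rw [cube, volume_pi_pi]
  simp [Real.volume_Ico]

lemma integrableOn_cube {d : ℕ} {F : Vec d → ℝ} (hF : Continuous F) :
    IntegrableOn F (cube d) := by
  have hK : IsCompact (Set.univ.pi fun _ : Fin d => Set.Icc (0:ℝ) 1) :=
    isCompact_univ_pi fun _ => isCompact_Icc
  refine (hF.continuousOn.integrableOn_compact hK).mono_set ?_
  exact Set.pi_mono fun i _ => Set.Ico_subset_Icc_self

lemma fderiv_periodic {d : ℕ} {f : Vec d → ℝ} (hf : ContDiff ℝ (⊤ : ℕ∞) f) (hper : IsPeriodic f) :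
    ∀ (x : Vec d) (n : Fin d → ℤ), fderiv ℝ f (x + fun i => (n i : ℝ)) = fderiv ℝ f x := by
  intro x n
  set c : Vec d := fun i => (n i : ℝ) with hc
  have h : f = fun y => f (y + c) := by
    funext y; rw [hper]
  have hg : HasFDerivAt (fun y : Vec d => y + c) (ContinuousLinearMap.id ℝ (Vec d)) x :=
    (hasFDerivAt_id x).add_const c
  have hfd : HasFDerivAt f (fderiv ℝ f (x + c)) (x + c) :=
    (hf.differentiable (by simp) (x + c)).hasFDerivAt
  have h2 : HasFDerivAt (fun y => f (y + c)) (fderiv ℝ f (x + c)) x := by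
    have := hfd.comp x hg
    rwa [ContinuousLinearMap.comp_id] at this
  conv_rhs => rw [h]
  exact (h2.fderiv).symm

lemma c1Norm_bounds {d : ℕ} {f : Vec d → ℝ} (hf : ContDiff ℝ (⊤ : ℕ∞) f) (hper : IsPeriodic f) :
    (∀ x, |f x| ≤ c1Norm d f) ∧ (∀ x, ‖fderiv ℝ f x‖ ≤ c1Norm d f) ∧ 0 ≤ c1Norm d f := by
  have hc : Continuous fun x : Vec d => max |f x| ‖fderiv ℝ f x‖ := by
    apply Continuous.max
    · exact continuous_abs.comp hf.continuous
    · exact (hf.continuous_fderiv (by simp)).norm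
  have hperP : ∀ (x : Vec d) (n : Fin d → ℤ),
      (max |f (x + fun i => (n i : ℝ))| ‖fderiv ℝ f (x + fun i => (n i : ℝ))‖)
        = max |f x| ‖fderiv ℝ f x‖ := by
    intro x n; rw [hper, fderiv_periodic hf hper]
  have hbdd : BddAbove (Set.range fun x : Vec d => max |f x| ‖fderiv ℝ f x‖) := by
    have hK : IsCompact (Set.univ.pi fun _ : Fin d => Set.Icc (0:ℝ) 1) :=
      isCompact_univ_pi fun _ => isCompact_Icc
    have h1 : (Set.range fun x : Vec d => max |f x| ‖fderiv ℝ f x‖) ⊆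
        (fun x : Vec d => max |f x| ‖fderiv ℝ f x‖) ''
          (Set.univ.pi fun _ : Fin d => Set.Icc (0:ℝ) 1) := by
      rintro - ⟨x, rfl⟩
      refine ⟨fun i => Int.fract (x i), fun i _ => ⟨Int.fract_nonneg _, (Int.fract_lt_one _).le⟩, ?_⟩
      have h3 : ((fun i => Int.fract (x i)) + fun i => ((⌊x i⌋ : ℤ) : ℝ)) = x := by
        funext i; simp only [Pi.add_apply]; exact Int.fract_add_floor (x i)
      have h2 := hperP (fun i => Int.fract (x i)) (fun i => ⌊x i⌋)
      rw [h3] at h2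
      simpa using h2.symm
    exact (hK.image hc).bddAbove.mono h1
  have hle : ∀ x : Vec d, max |f x| ‖fderiv ℝ f x‖ ≤ c1Norm d f := fun x =>
    le_ciSup hbdd x
  exact ⟨fun x => le_trans (le_max_left _ _) (hle x),
    fun x => le_trans (le_max_right _ _) (hle x),
    le_trans (abs_nonneg (f 0)) (le_trans (le_max_left _ _) (hle 0))⟩

lemma lipschitz_of_c1 {d : ℕ} {f : Vec d → ℝ} {M : ℝ} (hf : ContDiff ℝ (⊤ : ℕ∞) f)
    (hM : ∀ x, ‖fderiv ℝ f x‖ ≤ M) : ∀ x y : Vec d, |f x - f y| ≤ M * ‖x - y‖ := by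
  intro x y
  have := convex_univ.norm_image_sub_le_of_norm_fderiv_le
    (fun z _ => (hf.differentiable (by simp) z)) (fun z _ => hM z)
    (Set.mem_univ y) (Set.mem_univ x)
  simpa [Real.norm_eq_abs] using this

lemma rpow_abs_diff {p M a b : ℝ} (hp : 1 ≤ p) (hMa : |a| ≤ M) (hMb : |b| ≤ M) :
    abs (|a| ^ p - |b| ^ p) ≤ p * M ^ (p - 1) * |a - b| := by
  have hder : ∀ t ∈ Set.Icc (0:ℝ) M,
      HasDerivWithinAt (fun t : ℝ => t ^ p) (p * t ^ (p - 1)) (Set.Icc (0:ℝ) M) t := by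
    intro t _
    have := Real.hasDerivAt_rpow_const (p := p) (x := t) (Or.inr hp)
    simpa [mul_comm] using this.hasDerivWithinAt
  have hbound : ∀ t ∈ Set.Icc (0:ℝ) M, ‖p * t ^ (p - 1)‖ ≤ p * M ^ (p - 1) := by
    intro t ht
    rw [Real.norm_eq_abs, abs_of_nonneg (mul_nonneg (by linarith) (Real.rpow_nonneg ht.1 _))]
    exact mul_le_mul_of_nonneg_left
      (Real.rpow_le_rpow ht.1 ht.2 (by linarith)) (by linarith)
  have h1 := Convex.norm_image_sub_le_of_norm_hasDerivWithin_le hder hbound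
    (convex_Icc _ _) (⟨abs_nonneg b, hMb⟩ : |b| ∈ Set.Icc (0:ℝ) M)
    (⟨abs_nonneg a, hMa⟩ : |a| ∈ Set.Icc (0:ℝ) M)
  rw [Real.norm_eq_abs, Real.norm_eq_abs] at h1
  refine h1.trans (mul_le_mul_of_nonneg_left ?_ ?_)
  · exact abs_abs_sub_abs_le_abs_sub a b
  · have h0 : (0:ℝ) ≤ M := le_trans (abs_nonneg a) hMa
    positivity

lemma root_sub {p x y : ℝ} (hp : 1 ≤ p) (hy : 0 ≤ y) (hxy : y ≤ x) :
    x ^ (1/p) - y ^ (1/p) ≤ (x - y) ^ (1/p) := by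
  have hp0 : (0:ℝ) < p := lt_of_lt_of_le one_pos hp
  have hr1 : (1:ℝ)/p ≤ 1 := by
    rw [div_le_one hp0]; exact hp
  have hr0 : (0:ℝ) ≤ 1/p := by positivity
  have key := NNReal.rpow_add_le_add_rpow ((x - y).toNNReal) (y.toNNReal) hr0 hr1
  have hc : (((x - y).toNNReal + y.toNNReal : ℝ≥0) : ℝ) = x := by
    push_cast
    rw [Real.coe_toNNReal _ (sub_nonneg.2 hxy), Real.coe_toNNReal _ hy]
    ring
  have key2 : (((x - y).toNNReal + y.toNNReal : ℝ≥0) : ℝ) ^ ((1:ℝ)/p) ≤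
      ((x - y).toNNReal : ℝ) ^ ((1:ℝ)/p) + (y.toNNReal : ℝ) ^ ((1:ℝ)/p) := by
    rw [← NNReal.coe_rpow, ← NNReal.coe_rpow, ← NNReal.coe_rpow, ← NNReal.coe_add]
    exact_mod_cast key
  rw [hc, Real.coe_toNNReal _ (sub_nonneg.2 hxy), Real.coe_toNNReal _ hy] at key2
  linarith

lemma root_diff {p x y : ℝ} (hp : 1 ≤ p) (hx : 0 ≤ x) (hy : 0 ≤ y) :
    |x ^ (1/p) - y ^ (1/p)| ≤ |x - y| ^ (1/p) := by
  have hp0 : (0:ℝ) < p := lt_of_lt_of_le one_pos hp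
  have hr0 : (0:ℝ) ≤ 1/p := by positivity
  rcases le_total y x with h | h
  · rw [abs_of_nonneg (sub_nonneg.2 (Real.rpow_le_rpow hy h hr0)),
      abs_of_nonneg (sub_nonneg.2 h)]
    exact root_sub hp hy h
  · rw [abs_sub_comm, abs_of_nonneg (sub_nonneg.2 (Real.rpow_le_rpow hx h hr0)),
      abs_sub_comm x y, abs_of_nonneg (sub_nonneg.2 h)]
    exact root_sub hp hx h

def bigCube (d lam : ℕ) : Set (Vec d) := Set.univ.pi fun _ => Set.Ico (0:ℝ) (lam:ℝ)

lemma measurableSet_bigCube (d lam : ℕ) : MeasurableSet (bigCube d lam) :=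
  MeasurableSet.univ_pi fun _ => measurableSet_Ico

lemma integrableOn_bigCube {d lam : ℕ} {F : Vec d → ℝ} (hF : Continuous F) :
    IntegrableOn F (bigCube d lam) := by
  have hK : IsCompact (Set.univ.pi fun _ : Fin d => Set.Icc (0:ℝ) (lam:ℝ)) :=
    isCompact_univ_pi fun _ => isCompact_Icc
  refine (hF.continuousOn.integrableOn_compact hK).mono_set ?_
  exact Set.pi_mono fun i _ => Set.Ico_subset_Icc_self

def tile {d lam : ℕ} (k : Fin d → Fin lam) : Set (Vec d) :=
  Set.univ.pi fun i => Set.Ico ((k i : ℕ) : ℝ) ((k i : ℕ) + 1)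

lemma measurableSet_tile {d lam : ℕ} (k : Fin d → Fin lam) : MeasurableSet (tile k) :=
  MeasurableSet.univ_pi fun _ => measurableSet_Ico

lemma scale_integral {d : ℕ} (F : Vec d → ℝ) (lam : ℕ) (hlam : 1 ≤ lam) :
    ∫ x in cube d, F ((lam : ℝ) • x) = ((lam : ℝ) ^ d)⁻¹ * ∫ y in bigCube d lam, F y := by
  have hlam0 : (0:ℝ) < (lam : ℝ) := by exact_mod_cast hlam
  set G : Vec d → ℝ := (bigCube d lam).indicator F with hG
  have hmem : ∀ x : Vec d, ((lam : ℝ) • x ∈ bigCube d lam) ↔ x ∈ cube d := by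
    intro x
    constructor
    · intro h i _
      have := h i (Set.mem_univ i)
      simp only [Pi.smul_apply, smul_eq_mul, Set.mem_Ico] at this
      constructor
      · nlinarith [this.1]
      · nlinarith [this.2]
    · intro h i _
      have := h i (Set.mem_univ i)
      simp only [Set.mem_Ico] at this
      simp only [Pi.smul_apply, smul_eq_mul, Set.mem_Ico]
      constructor
      · nlinarith [this.1]
      · nlinarith [this.2]
  have h1 : ∫ x in cube d, F ((lam : ℝ) • x) = ∫ x, G ((lam : ℝ) • x) := by
    rw [← integral_indicator (measurableSet_cube d)]
    congr 1
    funext x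
    by_cases hx : x ∈ cube d
    · rw [Set.indicator_of_mem hx, hG, Set.indicator_of_mem ((hmem x).2 hx)]
    · rw [Set.indicator_of_notMem hx, hG,
        Set.indicator_of_notMem (fun h => hx ((hmem x).1 h))]
  rw [h1, Measure.integral_comp_smul_of_nonneg volume G (lam : ℝ) (hR := hlam0.le),
    Module.finrank_fin_fun, hG, integral_indicator (measurableSet_bigCube d lam)]
  simp [smul_eq_mul]

lemma bigCube_eq_iUnion (d lam : ℕ) (hlam : 1 ≤ lam) :
    bigCube d lam = ⋃ k : Fin d → Fin lam, tile k := by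
  ext x
  simp only [bigCube, tile, Set.mem_iUnion, Set.mem_pi, Set.mem_univ, forall_true_left,
    Set.mem_Ico, true_implies]
  constructor
  · intro h
    have hk : ∀ i, ⌊x i⌋.toNat < lam := by
      intro i
      have h1 := (h i).1
      have h2 := (h i).2
      have h3 : ⌊x i⌋ < (lam : ℤ) := Int.floor_lt.2 (by exact_mod_cast h2)
      omega
    refine ⟨fun i => ⟨⌊x i⌋.toNat, hk i⟩, fun i => ?_⟩
    have h0 : (0:ℤ) ≤ ⌊x i⌋ := Int.floor_nonneg.2 (h i).1
    have hcast : ((⌊x i⌋.toNat : ℕ) : ℝ) = (⌊x i⌋ : ℝ) := by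
      exact_mod_cast congrArg (Int.cast : ℤ → ℝ) (Int.toNat_of_nonneg h0)
    constructor
    · rw [hcast]; exact Int.floor_le (x i)
    · rw [hcast]; exact Int.lt_floor_add_one (x i)
  · rintro ⟨k, hk⟩ i
    have h1 := (hk i).1
    have h2 := (hk i).2
    have hki : ((k i : ℕ) : ℝ) + 1 ≤ (lam : ℝ) := by
      have : (k i : ℕ) + 1 ≤ lam := (k i).2
      exact_mod_cast this
    constructor
    · have : (0:ℝ) ≤ ((k i : ℕ) : ℝ) := by positivity
      linarith
    · linarith

lemma tile_disjoint {d lam : ℕ} :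
    Pairwise (Function.onFun Disjoint (tile (d := d) (lam := lam))) := by
  intro k k' hkk
  rw [Function.onFun, Set.disjoint_left]
  intro x hx hx'
  obtain ⟨i, hi⟩ : ∃ i, k i ≠ k' i := by
    by_contra h
    push_neg at h
    exact hkk (funext h)
  have h1 := hx i (Set.mem_univ i)
  have h2 := hx' i (Set.mem_univ i)
  simp only [Set.mem_Ico] at h1 h2
  have hne : (k i : ℕ) ≠ (k' i : ℕ) := fun h => hi (Fin.ext h)
  rcases hne.lt_or_gt with h | h
  · have : ((k i : ℕ) : ℝ) + 1 ≤ ((k' i : ℕ) : ℝ) := by exact_mod_cast h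
    linarith [h1.2, h2.1]
  · have : ((k' i : ℕ) : ℝ) + 1 ≤ ((k i : ℕ) : ℝ) := by exact_mod_cast h
    linarith [h2.2, h1.1]

lemma integral_bigCube_eq_sum {d lam : ℕ} (hlam : 1 ≤ lam) {F : Vec d → ℝ}
    (hF : IntegrableOn F (bigCube d lam)) :
    ∫ y in bigCube d lam, F y = ∑ k : Fin d → Fin lam, ∫ y in tile k, F y := by
  rw [bigCube_eq_iUnion d lam hlam] at hF ⊢
  rw [integral_iUnion (fun k => measurableSet_tile k) tile_disjoint hF, tsum_fintype]

lemma integral_tile_eq {d lam : ℕ} (F : Vec d → ℝ) (k : Fin d → Fin lam) :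
    ∫ y in tile k, F y = ∫ y in cube d, F (y + fun i => ((k i : ℕ) : ℝ)) := by
  set c : Vec d := fun i => ((k i : ℕ) : ℝ) with hc
  have hmem : ∀ x : Vec d, (c + x ∈ tile k) ↔ x ∈ cube d := by
    intro x
    constructor
    · intro h i _
      have := h i (Set.mem_univ i)
      simp only [Pi.add_apply, Set.mem_Ico, hc] at this
      exact ⟨by linarith [this.1], by linarith [this.2]⟩
    · intro h i _
      have := h i (Set.mem_univ i)
      simp only [Set.mem_Ico] at this
      simp only [Pi.add_apply, Set.mem_Ico, hc]
      exact ⟨by linarith [this.1], by linarith [this.2]⟩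
  rw [← integral_indicator (measurableSet_tile k),
    ← integral_add_left_eq_self ((tile k).indicator F) c,
    ← integral_indicator (measurableSet_cube d)]
  congr 1
  funext x
  by_cases hx : x ∈ cube d
  · rw [Set.indicator_of_mem ((hmem x).2 hx), Set.indicator_of_mem hx]
    congr 1
    funext i
    simp [hc, add_comm]
  · rw [Set.indicator_of_notMem (fun h => hx ((hmem x).1 h)), Set.indicator_of_notMem hx]

/-- **Improved Hölder inequality** (Lemma 2.1, eq. (2.4)): for `1/λ`-periodic oscillations
`g(λ·)`, `| ‖f g(λ·)‖_{L^p} - ‖f‖_{L^p} ‖g‖_{L^p} | ≤ C_p λ^{-1/p} ‖f‖_{C^1} ‖g‖_{L^p}`. -/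
theorem improved_holder (d : ℕ) (hd : 1 ≤ d) (p : ℝ) (hp : 1 ≤ p) :
    ∃ C : ℝ, 0 < C ∧ ∀ (lam : ℕ), 1 ≤ lam → ∀ f g : Vec d → ℝ,
      ContDiff ℝ (⊤ : ℕ∞) f → ContDiff ℝ (⊤ : ℕ∞) g → IsPeriodic f → IsPeriodic g →
      |lpNorm d p (fun x => f x * g ((lam : ℝ) • x)) - lpNorm d p f * lpNorm d p g| ≤
        C * (lam : ℝ) ^ (-(1 / p)) * c1Norm d f * lpNorm d p g := by
  have hp0 : (0:ℝ) < p := lt_of_lt_of_le one_pos hp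
  have hrp0 : (0:ℝ) ≤ 1/p := by positivity
  refine ⟨p ^ ((1:ℝ)/p), Real.rpow_pos_of_pos hp0 _, ?_⟩
  intro lam hlam f g hf hg hperf hperg
  have hlam0 : (0:ℝ) < (lam:ℝ) := by exact_mod_cast hlam
  obtain ⟨hfb, hfd, hM0⟩ := c1Norm_bounds hf hperf
  set M := c1Norm d f with hMdef
  rcases eq_or_lt_of_le hM0 with hM | hM
  · -- degenerate case `M = 0`, i.e. `f ≡ 0`
    have hf0 : ∀ x, f x = 0 := by
      intro x
      have h1 := hfb x; rw [← hM] at h1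
      exact abs_eq_zero.1 (le_antisymm h1 (abs_nonneg _))
    have hr0' : (1:ℝ)/p ≠ 0 := by positivity
    have hz2 : (0:ℝ) ^ p⁻¹ = 0 := Real.zero_rpow (inv_ne_zero hp0.ne')
    have h1 : lpNorm d p (fun x => f x * g ((lam:ℝ) • x)) = 0 := by
      simp [_root_.lpNorm, hf0, Real.zero_rpow hp0.ne', Real.zero_rpow hr0', hz2]
    have h2 : lpNorm d p f = 0 := by
      simp [_root_.lpNorm, hf0, Real.zero_rpow hp0.ne', Real.zero_rpow hr0', hz2]
    rw [h1, h2, ← hM]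
    simp
  -- main case `M > 0`
  set L := p * M ^ p with hLdef
  have hMp : (0:ℝ) ≤ M ^ p := Real.rpow_nonneg hM0 _
  have hL0 : 0 ≤ L := mul_nonneg hp0.le hMp
  set φ : Vec d → ℝ := fun x => |f x| ^ p with hφdef
  set h : Vec d → ℝ := fun x => |g x| ^ p with hhdef
  have hφc : Continuous φ := (continuous_abs.comp hf.continuous).rpow_const fun x => Or.inr hp0.le
  have hhc : Continuous h := (continuous_abs.comp hg.continuous).rpow_const fun x => Or.inr hp0.le
  have hφnn : ∀ x, 0 ≤ φ x := fun x => Real.rpow_nonneg (abs_nonneg _) _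
  have hhnn : ∀ x, 0 ≤ h x := fun x => Real.rpow_nonneg (abs_nonneg _) _
  have hhper : ∀ (x : Vec d) (n : Fin d → ℤ), h (x + fun i => (n i : ℝ)) = h x := by
    intro x n; simp only [hhdef]; rw [hperg]
  have hLip : ∀ a b : Vec d, |φ a - φ b| ≤ L * ‖a - b‖ := by
    intro a b
    have h1 := rpow_abs_diff hp (hfb a) (hfb b)
    have h2 := lipschitz_of_c1 hf hfd a b
    have h3 : M ^ (p - 1) * M = M ^ p := by
      rw [← Real.rpow_add_one hM.ne' (p - 1)]; norm_num
    calc |φ a - φ b| ≤ p * M ^ (p-1) * |f a - f b| := h1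
      _ ≤ p * M ^ (p-1) * (M * ‖a - b‖) := by
          apply mul_le_mul_of_nonneg_left h2
          exact mul_nonneg hp0.le (Real.rpow_nonneg hM0 _)
      _ = L * ‖a - b‖ := by rw [hLdef, ← h3]; ring
  set A := ∫ x in cube d, φ x with hAdef
  set B := ∫ x in cube d, h x with hBdef
  have hA0 : 0 ≤ A := setIntegral_nonneg (measurableSet_cube d) fun x _ => hφnn x
  have hB0 : 0 ≤ B := setIntegral_nonneg (measurableSet_cube d) fun x _ => hhnn x
  set I := ∫ x in cube d, φ x * h ((lam:ℝ) • x) with hIdef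
  have hI0 : 0 ≤ I :=
    setIntegral_nonneg (measurableSet_cube d) fun x _ => mul_nonneg (hφnn x) (hhnn _)
  set c : (Fin d → Fin lam) → Vec d := fun k i => ((k i : ℕ) : ℝ) with hcdef
  set φk : (Fin d → Fin lam) → Vec d → ℝ := fun k y => φ ((lam:ℝ)⁻¹ • (y + c k)) with hφkdef
  have hφkc : ∀ k, Continuous (φk k) := by
    intro k
    rw [hφkdef]
    exact hφc.comp (by fun_prop)
  set cc : (Fin d → Fin lam) → ℝ := fun k => ∫ z in cube d, φk k z with hccdef
  have hvolcube : volume (cube d) < ⊤ := by rw [volume_cube]; exact ENNReal.one_lt_top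
  -- expansion of `I`
  have hI : I = ((lam:ℝ)^d)⁻¹ * ∑ k, ∫ y in cube d, φk k y * h y := by
    set F : Vec d → ℝ := fun y => φ ((lam:ℝ)⁻¹ • y) * h y with hFdef
    have hFc : Continuous F := by
      rw [hFdef]
      exact (hφc.comp (by fun_prop)).mul hhc
    have e1 : Set.EqOn (fun x => φ x * h ((lam:ℝ) • x))
        (fun x => F ((lam:ℝ) • x)) (cube d) := by
      intro x _
      simp only [hFdef]
      rw [smul_smul, inv_mul_cancel₀ hlam0.ne', one_smul]
    rw [hIdef, setIntegral_congr_fun (measurableSet_cube d) e1,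
      scale_integral F lam hlam,
      integral_bigCube_eq_sum hlam (integrableOn_bigCube hFc)]
    congr 1
    apply Finset.sum_congr rfl
    intro k _
    rw [integral_tile_eq]
    apply setIntegral_congr_fun (measurableSet_cube d)
    intro y _
    have hcast : (fun i => (((k i : ℕ) : ℤ) : ℝ)) = fun i => ((k i : ℕ) : ℝ) := by
      funext i; push_cast; rfl
    have hper' : h (y + fun i => ((k i : ℕ) : ℝ)) = h y := by
      have h7 := hhper y fun i => ((k i : ℕ) : ℤ)
      rwa [hcast] at h7
    simp only [hFdef, hφkdef, hcdef]
    rw [hper']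
  -- expansion of `A`
  have hA : A = ((lam:ℝ)^d)⁻¹ * ∑ k, cc k := by
    set F2 : Vec d → ℝ := fun y => φ ((lam:ℝ)⁻¹ • y) with hF2def
    have hF2c : Continuous F2 := by
      rw [hF2def]
      exact hφc.comp (by fun_prop)
    have e2 : Set.EqOn φ (fun x => F2 ((lam:ℝ) • x)) (cube d) := by
      intro x _
      simp only [hF2def]
      rw [smul_smul, inv_mul_cancel₀ hlam0.ne', one_smul]
    rw [hAdef, setIntegral_congr_fun (measurableSet_cube d) e2,
      scale_integral F2 lam hlam,
      integral_bigCube_eq_sum hlam (integrableOn_bigCube hF2c)]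
    congr 1
    apply Finset.sum_congr rfl
    intro k _
    rw [integral_tile_eq]
  -- oscillation bound for `φk`
  have hosc : ∀ k, ∀ y ∈ cube d, |φk k y - cc k| ≤ L / lam := by
    intro k y hy
    have hpair : ∀ z ∈ cube d, |φk k y - φk k z| ≤ L / lam := by
      intro z hz
      have hd1 : (lam:ℝ)⁻¹ • (y + c k) - (lam:ℝ)⁻¹ • (z + c k) = (lam:ℝ)⁻¹ • (y - z) := by
        rw [← smul_sub]
        congr 1
        abel
      have h2 := hLip ((lam:ℝ)⁻¹ • (y + c k)) ((lam:ℝ)⁻¹ • (z + c k))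
      rw [hd1, norm_smul, Real.norm_eq_abs, abs_of_pos (inv_pos.2 hlam0)] at h2
      have hyz : ‖y - z‖ ≤ 1 := by
        rw [pi_norm_le_iff_of_nonneg zero_le_one]
        intro i
        have h3 := hy i (Set.mem_univ i)
        have h4 := hz i (Set.mem_univ i)
        simp only [Set.mem_Ico] at h3 h4
        rw [Real.norm_eq_abs, Pi.sub_apply, abs_le]
        constructor <;> linarith
      calc |φk k y - φk k z| ≤ L * ((lam:ℝ)⁻¹ * ‖y - z‖) := h2
        _ ≤ L * ((lam:ℝ)⁻¹ * 1) := by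
            apply mul_le_mul_of_nonneg_left _ hL0
            exact mul_le_mul_of_nonneg_left hyz (inv_pos.2 hlam0).le
        _ = L / lam := by rw [mul_one]; ring
    have hint1 : IntegrableOn (fun _ : Vec d => φk k y) (cube d) volume :=
      integrableOn_const hvolcube.ne
    have hint2 : IntegrableOn (φk k) (cube d) volume := integrableOn_cube (hφkc k)
    have hconst : ∫ _z in cube d, φk k y = φk k y := by
      rw [setIntegral_const, measureReal_def, volume_cube]; simp
    have heq : φk k y - cc k = ∫ z in cube d, (φk k y - φk k z) := by
      rw [integral_sub hint1 hint2, hconst, hccdef]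
    rw [heq]
    calc |∫ z in cube d, (φk k y - φk k z)| ≤ ∫ z in cube d, |φk k y - φk k z| := by
          simpa only [Real.norm_eq_abs] using
            norm_integral_le_integral_norm (μ := volume.restrict (cube d))
              fun z => φk k y - φk k z
      _ ≤ ∫ _z in cube d, L / lam := by
          apply setIntegral_mono_on ((hint1.sub hint2).abs)
            (integrableOn_const hvolcube.ne) (measurableSet_cube d)
          exact hpair
      _ = L / lam := by rw [setIntegral_const, measureReal_def, volume_cube]; simp
  -- per-tile estimate
  have hperk : ∀ k, |(∫ y in cube d, φk k y * h y) - cc k * B| ≤ L / lam * B := by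
    intro k
    have hint2 : IntegrableOn (fun y => φk k y * h y) (cube d) volume :=
      integrableOn_cube ((hφkc k).mul hhc)
    have hint3 : IntegrableOn (fun y => cc k * h y) (cube d) volume :=
      integrableOn_cube (continuous_const.mul hhc)
    have heq : (∫ y in cube d, φk k y * h y) - cc k * B = ∫ y in cube d, (φk k y - cc k) * h y := by
      rw [hBdef, ← integral_const_mul, ← integral_sub hint2 hint3]
      congr 1
      funext y
      ring
    rw [heq]
    calc |∫ y in cube d, (φk k y - cc k) * h y|
        ≤ ∫ y in cube d, |(φk k y - cc k) * h y| := by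
          simpa only [Real.norm_eq_abs] using
            norm_integral_le_integral_norm (μ := volume.restrict (cube d))
              fun y => (φk k y - cc k) * h y
      _ ≤ ∫ y in cube d, L / lam * h y := by
          apply setIntegral_mono_on
            (integrableOn_cube ((((hφkc k).sub continuous_const).mul hhc).abs))
            ((integrableOn_cube hhc).const_mul _) (measurableSet_cube d)
          intro y hy
          show |(φk k y - cc k) * h y| ≤ L / lam * h y
          rw [abs_mul, abs_of_nonneg (hhnn y)]
          exact mul_le_mul_of_nonneg_right (hosc k y hy) (hhnn y)
      _ = L / lam * B := by rw [integral_const_mul, hBdef]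
  have hcard : Fintype.card (Fin d → Fin lam) = lam ^ d := by
    simp [Fintype.card_fun]
  -- the key estimate
  have key : |I - A * B| ≤ L * B / lam := by
    rw [hI, hA]
    have heq : ((lam:ℝ)^d)⁻¹ * (∑ k, ∫ y in cube d, φk k y * h y)
          - (((lam:ℝ)^d)⁻¹ * ∑ k, cc k) * B
        = ((lam:ℝ)^d)⁻¹ * ∑ k, ((∫ y in cube d, φk k y * h y) - cc k * B) := by
      rw [Finset.sum_sub_distrib, ← Finset.sum_mul]
      ring
    rw [heq, abs_mul, abs_of_nonneg (by positivity : (0:ℝ) ≤ ((lam:ℝ)^d)⁻¹)]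
    calc ((lam:ℝ)^d)⁻¹ * |∑ k, ((∫ y in cube d, φk k y * h y) - cc k * B)|
        ≤ ((lam:ℝ)^d)⁻¹ * ∑ k, |(∫ y in cube d, φk k y * h y) - cc k * B| :=
          mul_le_mul_of_nonneg_left (Finset.abs_sum_le_sum_abs _ _) (by positivity)
      _ ≤ ((lam:ℝ)^d)⁻¹ * ∑ _k : Fin d → Fin lam, (L / lam * B) :=
          mul_le_mul_of_nonneg_left (Finset.sum_le_sum fun k _ => hperk k) (by positivity)
      _ = L * B / lam := by
          rw [Finset.sum_const, Finset.card_univ, hcard, nsmul_eq_mul]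
          push_cast
          field_simp
  -- conclusion
  have hlpfg : lpNorm d p (fun x => f x * g ((lam:ℝ) • x)) = I ^ (1/p) := by
    simp only [_root_.lpNorm, hIdef]
    congr 1
    apply setIntegral_congr_fun (measurableSet_cube d)
    intro x _
    simp only [hφdef, hhdef]
    rw [abs_mul, Real.mul_rpow (abs_nonneg _) (abs_nonneg _)]
  have hlpf : lpNorm d p f = A ^ (1/p) := by
    simp only [_root_.lpNorm, hAdef, hφdef]
  have hlpg : lpNorm d p g = B ^ (1/p) := by
    simp only [_root_.lpNorm, hBdef, hhdef]
  rw [hlpfg, hlpf, hlpg]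
  have hmul : A ^ ((1:ℝ)/p) * B ^ ((1:ℝ)/p) = (A * B) ^ ((1:ℝ)/p) :=
    (Real.mul_rpow hA0 hB0).symm
  rw [hmul]
  have h5 : (M ^ p) ^ ((1:ℝ)/p) = M := by
    rw [← Real.rpow_mul hM0, mul_one_div, div_self hp0.ne', Real.rpow_one]
  have h6 : ((lam:ℝ)⁻¹) ^ ((1:ℝ)/p) = (lam:ℝ) ^ (-(1/p)) := by
    rw [Real.inv_rpow hlam0.le, ← Real.rpow_neg hlam0.le]
  calc |I ^ ((1:ℝ)/p) - (A*B) ^ ((1:ℝ)/p)|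
      ≤ |I - A*B| ^ ((1:ℝ)/p) := root_diff hp hI0 (mul_nonneg hA0 hB0)
    _ ≤ (L * B / lam) ^ ((1:ℝ)/p) := Real.rpow_le_rpow (abs_nonneg _) key hrp0
    _ = p ^ ((1:ℝ)/p) * (lam:ℝ) ^ (-(1/p)) * M * B ^ ((1:ℝ)/p) := by
        rw [hLdef, div_eq_mul_inv,
          Real.mul_rpow (mul_nonneg (mul_nonneg hp0.le hMp) hB0) (by positivity),
          Real.mul_rpow (mul_nonneg hp0.le hMp) hB0,
          Real.mul_rpow hp0.le hMp, h5, h6]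
        ring
end
end

section
/- Let $\lambda \in \mathbb{N}$, $\lambda \geq 1$, and let $f, g : \mathbb{T}^d \to \mathbb{R}$ be smooth functions. Then for every $p \in [1,\infty)$, $\|f \cdot g(\lambda \cdot)\|_{L^p(\mathbb{T}^d)} \leq \|f\|_{L^p(\mathbb{T}^d)} \|g\|_{L^p(\mathbb{T}^d)} + C_p \lambda^{-1/p} \|f\|_{C^1(\mathbb{T}^d)} \|g\|_{L^p(\mathbb{T}^d)}$ for a constant $C_p$ depending only on $p$ and $d$. -/
open MeasureTheory
open scoped ENNReal NNReal BigOperators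

noncomputable section

namespace ImpHolder

variable {d lam : ℕ}

lemma mem_cube {x : Vec d} : x ∈ cube d ↔ ∀ i, 0 ≤ x i ∧ x i < 1 := by
  simp [cube, Set.mem_pi, Set.mem_Ico]

lemma cube_measurable (d : ℕ) : MeasurableSet (cube d) :=
  MeasurableSet.univ_pi fun _ => measurableSet_Ico

lemma volume_cube (d : ℕ) : volume (cube d) = 1 := by
  rw [cube, volume_pi_pi]
  simp

/-- corner vector of the subcube indexed by `j`. -/
def cvec (j : Fin d → Fin lam) : Vec d := fun i => (j i : ℝ)

/-- the affine map sending `cube` onto the subcube indexed by `j`. -/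
def Tmap (j : Fin d → Fin lam) : Vec d → Vec d := fun y => ((lam : ℝ))⁻¹ • (cvec j + y)

/-- the subcube indexed by `j`. -/
def Qcube (j : Fin d → Fin lam) : Set (Vec d) :=
  (fun x => (lam : ℝ) • x - cvec j) ⁻¹' cube d

lemma mem_Qcube {j : Fin d → Fin lam} {x : Vec d} :
    x ∈ Qcube j ↔ ∀ i, (j i : ℝ) ≤ (lam : ℝ) * x i ∧ (lam : ℝ) * x i < (j i : ℝ) + 1 := by
  simp only [Qcube, Set.mem_preimage, mem_cube, Pi.sub_apply, Pi.smul_apply, smul_eq_mul, cvec]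
  constructor
  · intro h i
    obtain ⟨h1, h2⟩ := h i
    exact ⟨by linarith, by linarith⟩
  · intro h i
    obtain ⟨h1, h2⟩ := h i
    exact ⟨by linarith, by linarith⟩

lemma Qcube_measurable (j : Fin d → Fin lam) : MeasurableSet (Qcube j) := by
  apply (cube_measurable d).preimage
  exact (measurable_const_smul _).sub measurable_const

lemma iUnion_Qcube (hlam : 1 ≤ lam) : (⋃ j : Fin d → Fin lam, Qcube j) = cube d := by
  have hL0 : (0:ℝ) < lam := by exact_mod_cast Nat.lt_of_lt_of_le Nat.zero_lt_one hlam
  ext x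
  simp only [Set.mem_iUnion, mem_Qcube, mem_cube]
  constructor
  · rintro ⟨j, hj⟩ i
    obtain ⟨h1, h2⟩ := hj i
    have hj0 : (0:ℝ) ≤ (j i : ℝ) := by positivity
    have hjl : ((j i : ℝ) + 1) ≤ (lam : ℝ) := by
      have := (j i).isLt
      exact_mod_cast Nat.succ_le_of_lt this
    exact ⟨by nlinarith, by nlinarith⟩
  · intro hx
    have hfl : ∀ i, (0:ℤ) ≤ ⌊(lam : ℝ) * x i⌋ ∧ ⌊(lam : ℝ) * x i⌋ < (lam : ℤ) := by
      intro i
      constructor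
      · exact Int.floor_nonneg.2 (by nlinarith [(hx i).1])
      · apply Int.floor_lt.2
        push_cast
        nlinarith [(hx i).2]
    refine ⟨fun i => ⟨(⌊(lam : ℝ) * x i⌋).toNat, ?_⟩, fun i => ?_⟩
    · have := (hfl i).2
      have h0 := (hfl i).1
      omega
    · have h0 := (hfl i).1
      have hcast : ((⌊(lam : ℝ) * x i⌋).toNat : ℝ) = (⌊(lam : ℝ) * x i⌋ : ℝ) := by
        exact_mod_cast Int.toNat_of_nonneg h0
      simp only [hcast]
      exact ⟨Int.floor_le _, Int.lt_floor_add_one _⟩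

lemma Qcube_disjoint :
    Pairwise (Function.onFun Disjoint (Qcube (d := d) (lam := lam))) := by
  intro j k hjk
  rw [Function.onFun, Set.disjoint_left]
  intro x hxj hxk
  apply hjk
  funext i
  have h1 := (mem_Qcube.1 hxj) i
  have h2 := (mem_Qcube.1 hxk) i
  have hj : ((j i : ℕ) : ℝ) < ((k i : ℕ) : ℝ) + 1 := lt_of_le_of_lt h1.1 h2.2
  have hk : ((k i : ℕ) : ℝ) < ((j i : ℕ) : ℝ) + 1 := lt_of_le_of_lt h2.1 h1.2
  have hj' : (j i : ℕ) < (k i : ℕ) + 1 := by exact_mod_cast hj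
  have hk' : (k i : ℕ) < (j i : ℕ) + 1 := by exact_mod_cast hk
  exact Fin.ext (by omega)

lemma Tmap_continuous (j : Fin d → Fin lam) : Continuous (Tmap j) :=
  by unfold Tmap; fun_prop

lemma map_Tmap (hlam : 1 ≤ lam) (j : Fin d → Fin lam) :
    Measure.map (Tmap j) volume = ENNReal.ofReal ((lam : ℝ) ^ d) • volume := by
  have hL0 : (0:ℝ) < lam := by exact_mod_cast Nat.lt_of_lt_of_le Nat.zero_lt_one hlam
  have hT : Tmap j = (fun z : Vec d => ((lam : ℝ))⁻¹ • cvec j + z) ∘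
      (fun y : Vec d => ((lam : ℝ))⁻¹ • y) := by
    funext y
    simp [Tmap, smul_add]
  rw [hT, ← Measure.map_map (measurable_const_add _) (measurable_const_smul _),
    Measure.map_addHaar_smul volume (inv_ne_zero hL0.ne'), Measure.map_smul,
    map_add_left_eq_self volume _]
  congr 1
  rw [Module.finrank_fin_fun]
  rw [abs_of_nonneg (by positivity)]
  congr 1
  rw [inv_pow, inv_inv]

lemma Tmap_preimage (hlam : 1 ≤ lam) (j : Fin d → Fin lam) :
    Tmap j ⁻¹' Qcube j = cube d := by
  have hL0 : (0:ℝ) < lam := by exact_mod_cast Nat.lt_of_lt_of_le Nat.zero_lt_one hlam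
  ext y
  have : (lam : ℝ) • Tmap j y - cvec j = y := by
    simp only [Tmap, smul_smul, mul_inv_cancel₀ hL0.ne', one_smul]
    abel
  simp only [Set.mem_preimage, Qcube, this]

lemma lintegral_Qcube (hlam : 1 ≤ lam) (h : Vec d → ℝ≥0∞) (hm : Measurable h)
    (j : Fin d → Fin lam) :
    ∫⁻ x in Qcube j, h x = (ENNReal.ofReal ((lam : ℝ) ^ d))⁻¹ * ∫⁻ y in cube d, h (Tmap j y) := by
  have hL0 : (0:ℝ) < lam := by exact_mod_cast Nat.lt_of_lt_of_le Nat.zero_lt_one hlam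
  have hκ0 : ENNReal.ofReal ((lam : ℝ) ^ d) ≠ 0 := by
    simp only [ne_eq, ENNReal.ofReal_eq_zero, not_le]
    positivity
  have key : ∫⁻ x in Qcube j, h x ∂(Measure.map (Tmap j) volume)
      = ∫⁻ y in cube d, h (Tmap j y) := by
    rw [Measure.restrict_map (Tmap_continuous j).measurable (Qcube_measurable j),
      lintegral_map hm (Tmap_continuous j).measurable, Tmap_preimage hlam]
  rw [map_Tmap hlam j] at key
  rw [Measure.restrict_smul, lintegral_smul_measure, smul_eq_mul] at key
  rw [← key, ← mul_assoc, ENNReal.inv_mul_cancel hκ0 ENNReal.ofReal_ne_top, one_mul]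

lemma volume_Qcube (hlam : 1 ≤ lam) (j : Fin d → Fin lam) :
    volume (Qcube j) = (ENNReal.ofReal ((lam : ℝ) ^ d))⁻¹ := by
  have := lintegral_Qcube (d := d) hlam (fun _ => 1) measurable_const j
  simpa [volume_cube] using this

lemma lintegral_cube_eq_sum (hlam : 1 ≤ lam) (h : Vec d → ℝ≥0∞) :
    ∫⁻ x in cube d, h x = ∑ j : Fin d → Fin lam, ∫⁻ x in Qcube j, h x := by
  rw [← iUnion_Qcube (d := d) hlam,
    lintegral_iUnion (fun j => Qcube_measurable j) Qcube_disjoint, tsum_fintype]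

variable {f : Vec d → ℝ}

lemma fderiv_periodic (hf : Differentiable ℝ f) (hfp : IsPeriodic f) (x : Vec d)
    (n : Fin d → ℤ) : fderiv ℝ f (x + fun i => (n i : ℝ)) = fderiv ℝ f x := by
  set c : Vec d := fun i => (n i : ℝ) with hc
  have hfun : (f ∘ fun y : Vec d => y + c) = f := funext fun y => hfp y n
  have hdc : DifferentiableAt ℝ (fun y : Vec d => y + c) x :=
    (differentiable_id.add_const c).differentiableAt
  have h1 : fderiv ℝ (fun y : Vec d => y + c) x = ContinuousLinearMap.id ℝ (Vec d) := by
    rw [fderiv_add_const, fderiv_id']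
  have h2 := fderiv_comp (𝕜 := ℝ) x (hf (x + c)) hdc
  rw [hfun, h1, ContinuousLinearMap.comp_id] at h2
  exact h2.symm

lemma c1Norm_bounds (hf : ContDiff ℝ (⊤ : ℕ∞) f) (hfp : IsPeriodic f) :
    (∀ x, |f x| ≤ c1Norm d f) ∧ (∀ x, ‖fderiv ℝ f x‖ ≤ c1Norm d f) := by
  set F : Vec d → ℝ := fun x => max |f x| ‖fderiv ℝ f x‖ with hF
  have hFc : Continuous F :=
    (hf.continuous.abs).max ((hf.continuous_fderiv (by simp)).norm)
  have hFP : ∀ (x : Vec d) (n : Fin d → ℤ), F (x + fun i => (n i : ℝ)) = F x := by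
    intro x n
    simp only [hF, hfp x n, fderiv_periodic (hf.differentiable (by simp)) hfp x n]
  have hsub : Set.range F ⊆ F '' (Set.Icc (0 : Vec d) 1) := by
    rintro - ⟨x, rfl⟩
    refine ⟨x + fun i => ((-⌊x i⌋ : ℤ) : ℝ), ?_, hFP x _⟩
    constructor
    · intro i
      simp only [Pi.add_apply, Pi.zero_apply]
      push_cast
      have := Int.floor_le (x i)
      linarith
    · intro i
      simp only [Pi.add_apply, Pi.one_apply]
      push_cast
      have := Int.lt_floor_add_one (x i)
      linarith
  have hbdd : BddAbove (Set.range F) :=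
    ((isCompact_Icc.image hFc).bddAbove).mono hsub
  exact ⟨fun x => (le_max_left _ _).trans (le_ciSup hbdd x),
    fun x => (le_max_right _ _).trans (le_ciSup hbdd x)⟩

lemma c1Norm_nonneg (hf : ContDiff ℝ (⊤ : ℕ∞) f) (hfp : IsPeriodic f) : 0 ≤ c1Norm d f :=
  (abs_nonneg _).trans ((c1Norm_bounds hf hfp).1 0)

lemma lipschitz_bound (hf : ContDiff ℝ (⊤ : ℕ∞) f) (hfp : IsPeriodic f) (x y : Vec d) :
    |f x - f y| ≤ c1Norm d f * ‖x - y‖ := by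
  have := Convex.norm_image_sub_le_of_norm_fderiv_le
    (fun z (_ : z ∈ (Set.univ : Set (Vec d))) => (hf.differentiable (by simp) z))
    (fun z _ => (c1Norm_bounds hf hfp).2 z) convex_univ (Set.mem_univ y) (Set.mem_univ x)
  simpa [Real.norm_eq_abs] using this

lemma lpNorm_eq {p : ℝ} (hp : 1 ≤ p) (F : Vec d → ℝ) (hF : Continuous F) :
    lpNorm d p F = ((∫⁻ x in cube d, ENNReal.ofReal (|F x| ^ p)) ^ (1 / p)).toReal := by
  rw [_root_.lpNorm.eq_1, integral_eq_lintegral_of_nonneg_ae, ENNReal.toReal_rpow]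
  · exact Filter.Eventually.of_forall fun x => Real.rpow_nonneg (abs_nonneg _) p
  · exact ((Real.continuous_rpow_const (by linarith)).comp hF.abs).aestronglyMeasurable

lemma lpNorm_nonneg {p : ℝ} (F : Vec d → ℝ) : 0 ≤ lpNorm d p F :=
  Real.rpow_nonneg
    (integral_nonneg fun x => Real.rpow_nonneg (abs_nonneg _) p) _

end ImpHolder

/-- **Improved Hölder inequality, one-sided form** (Lemma 2.1, eq. (2.5)):
`‖f g(λ·)‖_{L^p} ≤ ‖f‖_{L^p} ‖g‖_{L^p} + C_p λ^{-1/p} ‖f‖_{C^1} ‖g‖_{L^p}`. -/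
theorem improved_holder_one_sided (d : ℕ) (hd : 1 ≤ d) (p : ℝ) (hp : 1 ≤ p) :
    ∃ C : ℝ, 0 < C ∧ ∀ (lam : ℕ), 1 ≤ lam → ∀ f g : Vec d → ℝ,
      ContDiff ℝ (⊤ : ℕ∞) f → ContDiff ℝ (⊤ : ℕ∞) g → IsPeriodic f → IsPeriodic g →
      lpNorm d p (fun x => f x * g ((lam : ℝ) • x)) ≤
        lpNorm d p f * lpNorm d p g +
          C * (lam : ℝ) ^ (-(1 / p)) * c1Norm d f * lpNorm d p g := by
  classical
  refine ⟨2, by norm_num, ?_⟩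
  intro lam hlam f g hf hg hfp hgp
  have hL0 : (0:ℝ) < lam := by exact_mod_cast Nat.lt_of_lt_of_le Nat.zero_lt_one hlam
  have hL1 : (1:ℝ) ≤ lam := by exact_mod_cast hlam
  have hp0 : (0:ℝ) < p := lt_of_lt_of_le one_pos hp
  have h1p0 : (0:ℝ) ≤ 1 / p := by positivity
  set Cf := c1Norm d f with hCfdef
  obtain ⟨hfb, hfd⟩ := ImpHolder.c1Norm_bounds hf hfp
  obtain ⟨hgb, -⟩ := ImpHolder.c1Norm_bounds hg hgp
  have hCf0 : 0 ≤ Cf := ImpHolder.c1Norm_nonneg hf hfp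
  set ε : ℝ := (lam : ℝ)⁻¹ * Cf with hεdef
  have hε0 : 0 ≤ ε := by positivity
  set κ : ℝ≥0∞ := ENNReal.ofReal ((lam : ℝ) ^ d) with hκdef
  have hfc : Continuous f := hf.continuous
  have hgc : Continuous g := hg.continuous
  have hgl : Continuous (fun x : Vec d => g ((lam : ℝ) • x)) :=
    hgc.comp (continuous_const_smul _)
  have mF : Measurable (fun x : Vec d => ENNReal.ofReal |f x|) :=
    hfc.abs.measurable.ennreal_ofReal
  have mGl : Measurable (fun x : Vec d => ENNReal.ofReal |g ((lam : ℝ) • x)|) :=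
    hgl.abs.measurable.ennreal_ofReal
  have mGlp : Measurable (fun x : Vec d => ENNReal.ofReal |g ((lam : ℝ) • x)| ^ p) :=
    ENNReal.continuous_rpow_const.measurable.comp mGl
  have hor : ∀ t : ℝ, ENNReal.ofReal (|t| ^ p) = ENNReal.ofReal |t| ^ p := fun t =>
    (ENNReal.ofReal_rpow_of_nonneg (abs_nonneg _) hp0.le).symm
  have hsplit : ∀ a b : ℝ,
      ENNReal.ofReal (|a * b| ^ p) = ENNReal.ofReal |a| ^ p * ENNReal.ofReal |b| ^ p := by
    intro a b
    rw [abs_mul, Real.mul_rpow (abs_nonneg _) (abs_nonneg _),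
      ENNReal.ofReal_mul (Real.rpow_nonneg (abs_nonneg _) _), hor, hor]
  set A := ∫⁻ x in cube d, ENNReal.ofReal |f x| ^ p with hAdef
  set G := ∫⁻ x in cube d, ENNReal.ofReal |g x| ^ p with hGdef
  set I := ∫⁻ x in cube d,
      ENNReal.ofReal |f x| ^ p * ENNReal.ofReal |g ((lam : ℝ) • x)| ^ p with hIdef
  set B := ∫⁻ x in cube d, (ENNReal.ofReal |f x| + ENNReal.ofReal (2 * ε)) ^ p with hBdef
  -- pointwise closeness of `f` to its value at the corner of each subcube
  have hnear : ∀ (j : Fin d → Fin lam), ∀ x ∈ ImpHolder.Qcube j,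
      |f x - f (ImpHolder.Tmap j 0)| ≤ ε := by
    intro j x hx
    have hdist : ‖x - ImpHolder.Tmap j 0‖ ≤ (lam : ℝ)⁻¹ := by
      rw [pi_norm_le_iff_of_nonneg (by positivity)]
      intro i
      have hxi := (ImpHolder.mem_Qcube.1 hx) i
      have hTi : (ImpHolder.Tmap j 0) i = (lam : ℝ)⁻¹ * (j i : ℝ) := by
        simp [ImpHolder.Tmap, ImpHolder.cvec]
      have hinv : (0:ℝ) ≤ (lam : ℝ)⁻¹ := by positivity
      have h1 : x i - (lam : ℝ)⁻¹ * (j i : ℝ)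
          = (lam : ℝ)⁻¹ * ((lam : ℝ) * x i - (j i : ℝ)) := by
        field_simp
      rw [Pi.sub_apply, hTi, Real.norm_eq_abs, abs_le]
      constructor
      · nlinarith [hxi.1]
      · nlinarith [hxi.2]
    calc |f x - f (ImpHolder.Tmap j 0)| ≤ Cf * ‖x - ImpHolder.Tmap j 0‖ :=
          ImpHolder.lipschitz_bound hf hfp _ _
      _ ≤ Cf * (lam : ℝ)⁻¹ := mul_le_mul_of_nonneg_left hdist hCf0
      _ = ε := mul_comm _ _
  have hub : ∀ (j : Fin d → Fin lam), ∀ x ∈ ImpHolder.Qcube j,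
      ENNReal.ofReal |f x| ≤ ENNReal.ofReal (|f (ImpHolder.Tmap j 0)| + ε) := by
    intro j x hx
    apply ENNReal.ofReal_le_ofReal
    have h1 := hnear j x hx
    have h2 := abs_sub_abs_le_abs_sub (f x) (f (ImpHolder.Tmap j 0))
    linarith
  have hlb : ∀ (j : Fin d → Fin lam), ∀ y ∈ ImpHolder.Qcube j,
      ENNReal.ofReal (|f (ImpHolder.Tmap j 0)| + ε)
        ≤ ENNReal.ofReal |f y| + ENNReal.ofReal (2 * ε) := by
    intro j y hy
    rw [← ENNReal.ofReal_add (abs_nonneg _) (by positivity)]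
    apply ENNReal.ofReal_le_ofReal
    have h1 := hnear j y hy
    have h2 := abs_sub_abs_le_abs_sub (f (ImpHolder.Tmap j 0)) (f y)
    rw [abs_sub_comm] at h1
    linarith
  -- the scaled `g` integral over each subcube
  have hQg : ∀ j : Fin d → Fin lam,
      ∫⁻ x in ImpHolder.Qcube j, ENNReal.ofReal |g ((lam : ℝ) • x)| ^ p = κ⁻¹ * G := by
    intro j
    rw [ImpHolder.lintegral_Qcube hlam _ mGlp j]
    congr 1
    apply lintegral_congr
    intro y
    have h1 : (lam : ℝ) • ImpHolder.Tmap j y = ImpHolder.cvec j + y := by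
      simp [ImpHolder.Tmap, smul_smul, mul_inv_cancel₀ hL0.ne', one_smul]
    have h2 : ImpHolder.cvec j + y = y + fun i => (((j i : ℕ) : ℤ) : ℝ) := by
      funext i
      simp [ImpHolder.cvec, add_comm]
    rw [h1, h2, hgp y _]
  -- upper bound over each subcube
  have h3 : ∀ j : Fin d → Fin lam,
      ∫⁻ x in ImpHolder.Qcube j,
          ENNReal.ofReal |f x| ^ p * ENNReal.ofReal |g ((lam : ℝ) • x)| ^ p
        ≤ ENNReal.ofReal (|f (ImpHolder.Tmap j 0)| + ε) ^ p * (κ⁻¹ * G) := by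
    intro j
    calc ∫⁻ x in ImpHolder.Qcube j,
            ENNReal.ofReal |f x| ^ p * ENNReal.ofReal |g ((lam : ℝ) • x)| ^ p
        ≤ ∫⁻ x in ImpHolder.Qcube j,
            ENNReal.ofReal (|f (ImpHolder.Tmap j 0)| + ε) ^ p
              * ENNReal.ofReal |g ((lam : ℝ) • x)| ^ p := by
          apply setLIntegral_mono' (ImpHolder.Qcube_measurable j)
          intro x hx
          exact mul_le_mul_left (ENNReal.rpow_le_rpow (hub j x hx) hp0.le) _
      _ = ENNReal.ofReal (|f (ImpHolder.Tmap j 0)| + ε) ^ p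
            * ∫⁻ x in ImpHolder.Qcube j, ENNReal.ofReal |g ((lam : ℝ) • x)| ^ p :=
          lintegral_const_mul _ mGlp
      _ = _ := by rw [hQg j]
  have h5 : ∀ j : Fin d → Fin lam,
      ENNReal.ofReal (|f (ImpHolder.Tmap j 0)| + ε) ^ p * κ⁻¹
        ≤ ∫⁻ y in ImpHolder.Qcube j,
            (ENNReal.ofReal |f y| + ENNReal.ofReal (2 * ε)) ^ p := by
    intro j
    have hvol : ENNReal.ofReal (|f (ImpHolder.Tmap j 0)| + ε) ^ p * κ⁻¹
        = ∫⁻ _ in ImpHolder.Qcube j, ENNReal.ofReal (|f (ImpHolder.Tmap j 0)| + ε) ^ p := by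
      rw [setLIntegral_const, ImpHolder.volume_Qcube hlam j, hκdef]
    rw [hvol]
    apply setLIntegral_mono' (ImpHolder.Qcube_measurable j)
    intro y hy
    exact ENNReal.rpow_le_rpow (hlb j y hy) hp0.le
  -- main estimate at the level of `p`-th powers
  have hIle : I ≤ B * G := by
    calc I = ∑ j : Fin d → Fin lam, ∫⁻ x in ImpHolder.Qcube j,
            ENNReal.ofReal |f x| ^ p * ENNReal.ofReal |g ((lam : ℝ) • x)| ^ p :=
          ImpHolder.lintegral_cube_eq_sum hlam _
      _ ≤ ∑ j : Fin d → Fin lam,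
            ENNReal.ofReal (|f (ImpHolder.Tmap j 0)| + ε) ^ p * (κ⁻¹ * G) :=
          Finset.sum_le_sum fun j _ => h3 j
      _ = ∑ j : Fin d → Fin lam,
            (ENNReal.ofReal (|f (ImpHolder.Tmap j 0)| + ε) ^ p * κ⁻¹) * G :=
          Finset.sum_congr rfl fun j _ => (mul_assoc _ _ _).symm
      _ ≤ ∑ j : Fin d → Fin lam,
            (∫⁻ y in ImpHolder.Qcube j,
              (ENNReal.ofReal |f y| + ENNReal.ofReal (2 * ε)) ^ p) * G :=
          Finset.sum_le_sum fun j _ => mul_le_mul_left (h5 j) G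
      _ = (∑ j : Fin d → Fin lam, ∫⁻ y in ImpHolder.Qcube j,
            (ENNReal.ofReal |f y| + ENNReal.ofReal (2 * ε)) ^ p) * G :=
          (Finset.sum_mul _ _ _).symm
      _ = B * G := by rw [← ImpHolder.lintegral_cube_eq_sum hlam]
  -- Minkowski
  have hMink : B ^ (1 / p) ≤ A ^ (1 / p) + ENNReal.ofReal (2 * ε) := by
    have hmk := ENNReal.lintegral_Lp_add_le (μ := volume.restrict (cube d))
      (f := fun x : Vec d => ENNReal.ofReal |f x|)
      (g := fun _ : Vec d => ENNReal.ofReal (2 * ε))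
      mF.aemeasurable aemeasurable_const hp
    have hconst : (∫⁻ _ in cube d, ENNReal.ofReal (2 * ε) ^ p) ^ (1 / p)
        = ENNReal.ofReal (2 * ε) := by
      rw [setLIntegral_const, ImpHolder.volume_cube, mul_one, ← ENNReal.rpow_mul,
        mul_one_div_cancel hp0.ne', ENNReal.rpow_one]
    calc B ^ (1 / p) = (∫⁻ a in cube d,
          ((fun x : Vec d => ENNReal.ofReal |f x|)
            + fun _ : Vec d => ENNReal.ofReal (2 * ε)) a ^ p) ^ (1 / p) := rfl
      _ ≤ (∫⁻ a in cube d, ENNReal.ofReal |f a| ^ p) ^ (1 / p)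
          + (∫⁻ _ in cube d, ENNReal.ofReal (2 * ε) ^ p) ^ (1 / p) := hmk
      _ = A ^ (1 / p) + ENNReal.ofReal (2 * ε) := by rw [hconst]
  -- finiteness
  have hAt : A ≠ ⊤ := by
    have hle : A ≤ ∫⁻ _ in cube d, ENNReal.ofReal Cf ^ p :=
      setLIntegral_mono' (ImpHolder.cube_measurable d) fun x _ =>
        ENNReal.rpow_le_rpow (ENNReal.ofReal_le_ofReal (hfb x)) hp0.le
    refine ne_top_of_le_ne_top ?_ hle
    rw [setLIntegral_const, ImpHolder.volume_cube, mul_one]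
    exact ENNReal.rpow_ne_top_of_nonneg hp0.le ENNReal.ofReal_ne_top
  have hGt : G ≠ ⊤ := by
    have hle : G ≤ ∫⁻ _ in cube d, ENNReal.ofReal (c1Norm d g) ^ p :=
      setLIntegral_mono' (ImpHolder.cube_measurable d) fun x _ =>
        ENNReal.rpow_le_rpow (ENNReal.ofReal_le_ofReal (hgb x)) hp0.le
    refine ne_top_of_le_ne_top ?_ hle
    rw [setLIntegral_const, ImpHolder.volume_cube, mul_one]
    exact ENNReal.rpow_ne_top_of_nonneg hp0.le ENNReal.ofReal_ne_top
  have hfin : I ^ (1 / p) ≤ (A ^ (1 / p) + ENNReal.ofReal (2 * ε)) * G ^ (1 / p) := by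
    calc I ^ (1 / p) ≤ (B * G) ^ (1 / p) := ENNReal.rpow_le_rpow hIle h1p0
      _ = B ^ (1 / p) * G ^ (1 / p) := ENNReal.mul_rpow_of_nonneg _ _ h1p0
      _ ≤ _ := mul_le_mul_left hMink _
  have hRHSfin : (A ^ (1 / p) + ENNReal.ofReal (2 * ε)) * G ^ (1 / p) ≠ ⊤ :=
    ENNReal.mul_ne_top
      (ENNReal.add_ne_top.2 ⟨ENNReal.rpow_ne_top_of_nonneg h1p0 hAt, ENNReal.ofReal_ne_top⟩)
      (ENNReal.rpow_ne_top_of_nonneg h1p0 hGt)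
  -- translate back to real norms
  have e1 : lpNorm d p (fun x => f x * g ((lam : ℝ) • x)) = (I ^ (1 / p)).toReal := by
    rw [ImpHolder.lpNorm_eq hp (fun x => f x * g ((lam : ℝ) • x)) (hfc.mul hgl)]
    have : ∫⁻ x in cube d, ENNReal.ofReal (|f x * g ((lam : ℝ) • x)| ^ p) = I :=
      lintegral_congr fun x => hsplit _ _
    rw [this]
  have e2 : lpNorm d p f = (A ^ (1 / p)).toReal := by
    rw [ImpHolder.lpNorm_eq hp f hfc]
    have : ∫⁻ x in cube d, ENNReal.ofReal (|f x| ^ p) = A := lintegral_congr fun x => hor _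
    rw [this]
  have e3 : lpNorm d p g = (G ^ (1 / p)).toReal := by
    rw [ImpHolder.lpNorm_eq hp g hgc]
    have : ∫⁻ x in cube d, ENNReal.ofReal (|g x| ^ p) = G := lintegral_congr fun x => hor _
    rw [this]
  have hexp : (lam : ℝ)⁻¹ ≤ (lam : ℝ) ^ (-(1 / p)) := by
    rw [← Real.rpow_neg_one]
    apply Real.rpow_le_rpow_of_exponent_le hL1
    have h1 : 1 / p ≤ 1 := by
      rw [div_le_one hp0]
      exact hp
    linarith
  have hlpg : 0 ≤ lpNorm d p g := ImpHolder.lpNorm_nonneg g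
  calc lpNorm d p (fun x => f x * g ((lam : ℝ) • x)) = (I ^ (1 / p)).toReal := e1
    _ ≤ ((A ^ (1 / p) + ENNReal.ofReal (2 * ε)) * G ^ (1 / p)).toReal :=
        ENNReal.toReal_mono hRHSfin hfin
    _ = lpNorm d p f * lpNorm d p g + (2 * ε) * lpNorm d p g := by
        rw [ENNReal.toReal_mul,
          ENNReal.toReal_add (ENNReal.rpow_ne_top_of_nonneg h1p0 hAt) ENNReal.ofReal_ne_top,
          ENNReal.toReal_ofReal (by positivity), e2, e3, add_mul]
    _ ≤ lpNorm d p f * lpNorm d p g + 2 * (lam : ℝ) ^ (-(1 / p)) * Cf * lpNorm d p g := by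
        have : (2 * ε) * lpNorm d p g ≤ 2 * (lam : ℝ) ^ (-(1 / p)) * Cf * lpNorm d p g := by
          apply mul_le_mul_of_nonneg_right _ hlpg
          rw [hεdef]
          nlinarith [hexp, hCf0]
        linarith
end
end

section
/- Let $d \geq 3$, $p \in (1,\infty)$, $\tilde p \in [1,\infty)$ with $\frac1p + \frac1{\tilde p} > 1 + \frac{1}{d-1}$, and set $a = (d-1)/p$, $b = (d-1)/p'$. Then there exists $\gamma > 0$ and a constant $M$ (depending only on $\Phi$ and $d$) such that for all $\mu \geq 1$: $\|\Theta^j_\mu\|_{L^1(\mathbb{T}^d)} \leq M\mu^{-\gamma}$, $\|W^j_\mu\|_{L^1(\mathbb{T}^d)} \leq M\mu^{-\gamma}$, and $\|W^j_\mu\|_{W^{1,\tilde p}(\mathbb{T}^d)} \leq M\mu^{-\gamma}$. -/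
open MeasureTheory
open scoped ENNReal NNReal BigOperators

noncomputable section

/-- The periodic Mikado density on the torus `𝕋^{n+1}`: the 1-periodic extension of
`x ↦ μ^a Φ(μ x̂ⱼ)`, where `x̂ⱼ` omits the `j`-th coordinate. -/
def mikadoTheta (n : ℕ) (a μ : ℝ) (Φ : Vec n → ℝ) (j : Fin (n + 1)) : Vec (n + 1) → ℝ :=
  fun x => μ ^ a * Φ (fun i => μ * Int.fract (x (j.succAbove i)))

/-- The periodic Mikado field on the torus `𝕋^{n+1}`: the 1-periodic extension of
`x ↦ μ^b Φ(μ x̂ⱼ) eⱼ`. -/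
def mikadoW (n : ℕ) (b μ : ℝ) (Φ : Vec n → ℝ) (j : Fin (n + 1)) : Vec (n + 1) → Vec (n + 1) :=
  fun x => Pi.single j (μ ^ b * Φ (fun i => μ * Int.fract (x (j.succAbove i))))

lemma mem_cube {d : ℕ} {x : Vec d} (hx : x ∈ cube d) (i : Fin d) : 0 ≤ x i ∧ x i < 1 := by
  have := hx i (Set.mem_univ i)
  exact ⟨this.1, this.2⟩

lemma integrableOn_cube_s13 {d : ℕ} {g : Vec d → ℝ} (hg : Continuous g) (C : ℝ)
    (hC : ∀ x, |g x| ≤ C) : IntegrableOn g (cube d) := by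
  have : IsFiniteMeasure (volume.restrict (cube d)) := by
    constructor
    rw [Measure.restrict_apply_univ, volume_cube]
    exact ENNReal.one_lt_top
  exact (integrable_const C).mono' hg.aestronglyMeasurable
    (Filter.Eventually.of_forall fun x => by simpa using hC x)

lemma slice_integral (n : ℕ) (j : Fin (n + 1)) (F : Vec n → ℝ) :
    ∫ x in cube (n + 1), F (fun i => x (j.succAbove i)) = ∫ y in cube n, F y := by
  have hmp := volume_preserving_piFinSuccAbove (fun _ : Fin (n + 1) => ℝ) j
  have hemb := (MeasurableEquiv.piFinSuccAbove (fun _ : Fin (n+1) => ℝ) j).measurableEmbedding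
  have hpre : (MeasurableEquiv.piFinSuccAbove (fun _ : Fin (n+1) => ℝ) j) ⁻¹'
      ((Set.Ico (0:ℝ) 1) ×ˢ cube n) = cube (n+1) := by
    ext x
    simp only [Set.mem_preimage, Set.mem_prod, cube, Set.mem_pi, Set.mem_univ, forall_true_left,
      MeasurableEquiv.piFinSuccAbove_apply]
    rw [Fin.forall_iff_succAbove j]
    rfl
  calc ∫ x in cube (n + 1), F (fun i => x (j.succAbove i))
      = ∫ q in (Set.Ico (0:ℝ) 1) ×ˢ cube n, F q.2 := by
        rw [← hpre]
        exact hmp.setIntegral_preimage_emb hemb (fun q => F q.2) _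
    _ = ∫ y in cube n, F y := by
        rw [Measure.volume_eq_prod, ← Measure.prod_restrict]
        have := integral_prod_mul (μ := volume.restrict (Set.Ico (0:ℝ) 1))
          (ν := volume.restrict (cube n)) (f := fun _ => (1:ℝ)) (g := F)
        simpa using this

lemma scale_integral_s13 (n : ℕ) {F : Vec n → ℝ} (hF : Continuous F) (hFc : HasCompactSupport F)
    (hFnn : ∀ y, 0 ≤ F y) {μ : ℝ} (hμ : 0 < μ) :
    ∫ y in cube n, F (μ • y) ≤ μ ^ (-(n:ℝ)) * ∫ y, F y := by
  have hint : Integrable (fun y : Vec n => F (μ • y)) := by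
    have : HasCompactSupport fun y : Vec n => F (μ • y) :=
      hFc.comp_homeomorph (Homeomorph.smulOfNeZero μ hμ.ne')
    exact (hF.comp (continuous_const_smul μ)).integrable_of_hasCompactSupport this
  have h1 : ∫ y in cube n, F (μ • y) ≤ ∫ y, F (μ • y) :=
    setIntegral_le_integral hint (Filter.Eventually.of_forall fun y => hFnn _)
  have h2 : ∫ y : Vec n, F (μ • y) = μ ^ (-(n:ℝ)) * ∫ y, F y := by
    rw [Measure.integral_comp_smul_of_nonneg volume F μ (hR := hμ.le)]
    have hfr : Module.finrank ℝ (Vec n) = n := Module.finrank_fin_fun ℝ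
    rw [hfr, smul_eq_mul, ← Real.rpow_natCast μ n, ← Real.rpow_neg hμ.le]
  linarith

lemma core_integral (n : ℕ) (j : Fin (n + 1)) {F : Vec n → ℝ} (hF : Continuous F)
    (hFc : HasCompactSupport F) (hFnn : ∀ y, 0 ≤ F y) {μ : ℝ} (hμ : 0 < μ) :
    ∫ x in cube (n + 1), F (μ • fun i => x (j.succAbove i)) ≤ μ ^ (-(n:ℝ)) * ∫ y, F y := by
  calc ∫ x in cube (n + 1), F (μ • fun i => x (j.succAbove i))
      = ∫ y in cube n, F (μ • y) := slice_integral n j (fun y => F (μ • y))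
    _ ≤ μ ^ (-(n:ℝ)) * ∫ y, F y := scale_integral_s13 n hF hFc hFnn hμ

lemma cube_integral_le (n : ℕ) (j : Fin (n+1)) {G : Vec n → ℝ} (hG : Continuous G)
    (hGc : HasCompactSupport G) (hGnn : ∀ y, 0 ≤ G y) {μ c : ℝ} (hμ : 0 < μ) (hc : 0 ≤ c)
    {f : Vec (n+1) → ℝ}
    (hf : ∀ x ∈ cube (n+1), f x = c * G (μ • fun i => x (j.succAbove i))) :
    ∫ x in cube (n+1), f x ≤ c * (μ ^ (-(n:ℝ)) * ∫ y, G y) := by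
  rw [setIntegral_congr_fun (measurableSet_cube _) hf, MeasureTheory.integral_const_mul]
  exact mul_le_mul_of_nonneg_left (core_integral n j hG hGc hGnn hμ) hc

lemma final_bound {I C M μ γ : ℝ} (s : ℝ) (hμ : 1 ≤ μ) (hs : s ≤ -γ) (hC : 0 ≤ C) (hCM : C ≤ M)
    (hI : I ≤ μ ^ s * C) : I ≤ M * μ ^ (-γ) := by
  have h1 : μ ^ s ≤ μ ^ (-γ) := Real.rpow_le_rpow_of_exponent_le hμ hs
  have h2 : (0:ℝ) < μ := lt_of_lt_of_le one_pos hμ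
  calc I ≤ μ ^ s * C := hI
    _ ≤ μ ^ (-γ) * M := mul_le_mul h1 hCM hC (Real.rpow_nonneg h2.le _)
    _ = M * μ ^ (-γ) := mul_comm _ _

lemma rpow_term_bound {I C μ s pt : ℝ} (hpt : 0 < pt) (hμ : 0 < μ) (hC : 0 ≤ C) (hI0 : 0 ≤ I)
    (hI : I ≤ μ ^ s * C) : I ^ (1/pt) ≤ μ ^ (s * (1/pt)) * C ^ (1/pt) := by
  have h := Real.rpow_le_rpow hI0 hI (by positivity : (0:ℝ) ≤ 1/pt)
  calc I ^ (1/pt) ≤ (μ ^ s * C) ^ (1/pt) := h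
    _ = μ ^ (s * (1/pt)) * C ^ (1/pt) := by
        rw [Real.mul_rpow (Real.rpow_nonneg hμ.le _) hC, ← Real.rpow_mul hμ.le]

lemma ae_good (n : ℕ) (j : Fin (n + 1)) :
    ∀ᵐ x : Vec (n + 1), ∀ i : Fin n, Int.fract (x (j.succAbove i)) ≠ 0 := by
  rw [MeasureTheory.ae_all_iff]
  intro i
  have hsub : {x : Vec (n+1) | ¬ Int.fract (x (j.succAbove i)) ≠ 0} ⊆
      ⋃ m : ℤ, {x : Vec (n+1) | x (j.succAbove i) = (m : ℝ)} := by
    intro x hx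
    simp only [Set.mem_setOf_eq, not_not] at hx
    refine Set.mem_iUnion.2 ⟨⌊x (j.succAbove i)⌋, ?_⟩
    simp only [Set.mem_setOf_eq]
    have h : Int.fract (x (j.succAbove i)) = x (j.succAbove i) - ⌊x (j.succAbove i)⌋ := rfl
    rw [h] at hx
    linarith
  rw [MeasureTheory.ae_iff]
  refine measure_mono_null hsub (measure_iUnion_null fun m => ?_)
  rw [volume_pi]
  exact Measure.pi_hyperplane _ _ _

lemma pi_single_eq_smul (n : ℕ) (j : Fin (n + 1)) (c : ℝ) :
    (Pi.single j c : Vec (n + 1)) = c • (Pi.single j (1 : ℝ) : Vec (n + 1)) := by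
  funext k
  rcases eq_or_ne k j with rfl | hk
  · simp
  · simp [Pi.single_eq_of_ne hk]

set_option maxHeartbeats 1000000 in
lemma norm_fderiv_mikadoW_le (n : ℕ) (b : ℝ) {μ : ℝ} (hμ : 0 < μ) (Φ : Vec n → ℝ)
    (hΦ : ContDiff ℝ (⊤ : ℕ∞) Φ) (j : Fin (n + 1)) {x : Vec (n + 1)}
    (hx : ∀ i : Fin n, Int.fract (x (j.succAbove i)) ≠ 0) :
    ‖fderiv ℝ (mikadoW n b μ Φ j) x‖ ≤
      μ ^ b * μ * ‖fderiv ℝ Φ (fun i => μ * Int.fract (x (j.succAbove i)))‖ := by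
  set π : Vec (n + 1) →L[ℝ] Vec n :=
    ContinuousLinearMap.pi (fun i => ContinuousLinearMap.proj (j.succAbove i)) with hπdef
  have hπ : ‖π‖ ≤ 1 := by
    refine ContinuousLinearMap.opNorm_le_bound _ zero_le_one fun y => ?_
    rw [one_mul]
    refine (pi_norm_le_iff_of_nonneg (norm_nonneg y)).2 fun i => ?_
    exact norm_le_pi_norm y (j.succAbove i)
  set z : Vec n := fun i => μ * Int.fract (x (j.succAbove i)) with hzdef
  set ψ := fderiv ℝ Φ with hψdef
  set A : Vec (n + 1) → Vec n :=
    fun y => (μ • π) y - μ • (fun i => (⌊x (j.succAbove i)⌋ : ℝ)) with hAdef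
  have hA : HasFDerivAt A (μ • π) x := (μ • π).hasFDerivAt.sub_const _
  have hAx : A x = z := by
    funext i
    simp only [hAdef, hzdef, Pi.sub_apply, Pi.smul_apply, smul_eq_mul,
      ContinuousLinearMap.smul_apply]
    have : π x i = x (j.succAbove i) := rfl
    rw [this, Int.fract]
    ring
  set U : Set (Vec (n + 1)) :=
    {y | ∀ i : Fin n, y (j.succAbove i) ∈
      Set.Ioo ((⌊x (j.succAbove i)⌋ : ℝ)) ((⌊x (j.succAbove i)⌋ : ℝ) + 1)} with hUdef
  have hUopen : IsOpen U := by
    have : U = ⋂ i : Fin n, (fun y : Vec (n+1) => y (j.succAbove i)) ⁻¹'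
        Set.Ioo ((⌊x (j.succAbove i)⌋ : ℝ)) ((⌊x (j.succAbove i)⌋ : ℝ) + 1) := by
      ext y; simp [hUdef]
    rw [this]
    exact isOpen_iInter_of_finite fun i => isOpen_Ioo.preimage (continuous_apply _)
  have hxU : x ∈ U := by
    intro i
    constructor
    · have h1 : 0 < Int.fract (x (j.succAbove i)) :=
        lt_of_le_of_ne (Int.fract_nonneg _) (Ne.symm (hx i))
      have h2 : Int.fract (x (j.succAbove i)) =
          x (j.succAbove i) - ⌊x (j.succAbove i)⌋ := rfl
      rw [h2] at h1
      linarith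
    · exact Int.lt_floor_add_one _
  have hfloor : ∀ y ∈ U, ∀ i : Fin n,
      ⌊y (j.succAbove i)⌋ = ⌊x (j.succAbove i)⌋ := by
    intro y hy i
    have h := hy i
    exact Int.floor_eq_iff.2 ⟨h.1.le, h.2⟩
  have hAeq : ∀ y ∈ U, A y = fun i => μ * Int.fract (y (j.succAbove i)) := by
    intro y hy
    funext i
    simp only [hAdef, Pi.sub_apply, Pi.smul_apply, smul_eq_mul,
      ContinuousLinearMap.smul_apply]
    have : π y i = y (j.succAbove i) := rfl
    rw [this, Int.fract, hfloor y hy i]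
    ring
  have hloc : mikadoW n b μ Φ j =ᶠ[nhds x]
      fun y => (μ ^ b * Φ (A y)) • (Pi.single j (1 : ℝ) : Vec (n+1)) := by
    filter_upwards [hUopen.mem_nhds hxU] with y hy
    rw [mikadoW, hAeq y hy, pi_single_eq_smul]
  have hΦd : HasFDerivAt Φ (ψ z) (A x) := by
    rw [hAx]
    exact ((hΦ.differentiable (by simp)) z).hasFDerivAt
  have hcomp : HasFDerivAt (fun y => Φ (A y)) ((ψ z).comp (μ • π)) x :=
    hΦd.comp x hA
  have hs : HasFDerivAt (fun y => μ ^ b * Φ (A y)) (μ ^ b • ((ψ z).comp (μ • π))) x :=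
    hcomp.const_mul _
  have hW' : HasFDerivAt (fun y => (μ ^ b * Φ (A y)) • (Pi.single j (1:ℝ) : Vec (n+1)))
      ((μ ^ b • ((ψ z).comp (μ • π))).smulRight (Pi.single j (1:ℝ))) x :=
    hs.smul_const _
  have hW : HasFDerivAt (mikadoW n b μ Φ j)
      ((μ ^ b • ((ψ z).comp (μ • π))).smulRight (Pi.single j (1:ℝ))) x :=
    hW'.congr_of_eventuallyEq hloc
  rw [hW.fderiv, ContinuousLinearMap.norm_smulRight_apply]
  have h1 : ‖(Pi.single j (1:ℝ) : Vec (n+1))‖ = 1 := by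
    rw [Pi.norm_single]; exact norm_one
  rw [h1, mul_one]
  have hb0 : (0:ℝ) ≤ μ ^ b := Real.rpow_nonneg hμ.le b
  have hcore : ‖(ψ z).comp (μ • π)‖ ≤ ‖ψ z‖ * μ := by
    calc ‖(ψ z).comp (μ • π)‖ ≤ ‖ψ z‖ * ‖μ • π‖ := ContinuousLinearMap.opNorm_comp_le _ _
      _ ≤ ‖ψ z‖ * μ := by
          refine mul_le_mul_of_nonneg_left ?_ (norm_nonneg _)
          calc ‖μ • π‖ ≤ ‖μ‖ * ‖π‖ := ContinuousLinearMap.opNorm_smul_le _ _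
            _ ≤ μ := by
                rw [Real.norm_eq_abs, abs_of_nonneg hμ.le]
                nlinarith [norm_nonneg π]
  have h2 : ‖μ ^ b • ((ψ z).comp (μ • π))‖ ≤ μ ^ b * (‖ψ z‖ * μ) := by
    calc ‖μ ^ b • ((ψ z).comp (μ • π))‖
        ≤ ‖μ ^ b‖ * ‖(ψ z).comp (μ • π)‖ := ContinuousLinearMap.opNorm_smul_le _ _
      _ ≤ μ ^ b * (‖ψ z‖ * μ) := by
          rw [Real.norm_eq_abs, abs_of_nonneg hb0]
          exact mul_le_mul_of_nonneg_left hcore hb0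
  calc ‖μ ^ b • ((ψ z).comp (μ • π))‖ ≤ μ ^ b * (‖ψ z‖ * μ) := h2
    _ = μ ^ b * μ * ‖ψ z‖ := by ring

/-- **Smallness of the Mikado densities and fields** (eq. (4.4), Remark 4.2):
with `d = n + 1 ≥ 3`, `a = (d-1)/p`, `b = (d-1)/p'` and `1/p + 1/p̃ > 1 + 1/(d-1)`,
there are `γ > 0` and `M` such that for all `μ ≥ 1` and all `j`:
`‖Θʲ_μ‖_{L¹} ≤ M μ^{-γ}`, `‖Wʲ_μ‖_{L¹} ≤ M μ^{-γ}`, `‖Wʲ_μ‖_{W^{1,p̃}} ≤ M μ^{-γ}`. -/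
theorem mikado_smallness (n : ℕ) (hn : 2 ≤ n) (p pt : ℝ) (hp : 1 < p) (hpt : 1 ≤ pt)
    (hcond : 1 / p + 1 / pt > 1 + 1 / (n : ℝ))
    (Φ : Vec n → ℝ) (hΦ : ContDiff ℝ (⊤ : ℕ∞) Φ) (hΦc : HasCompactSupport Φ)
    (hsupp : tsupport Φ ⊆ Set.univ.pi fun _ => Set.Ioo (0:ℝ) 1) :
    ∃ γ : ℝ, 0 < γ ∧ ∃ M : ℝ, 0 < M ∧ ∀ μ : ℝ, 1 ≤ μ → ∀ j : Fin (n + 1),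
      lpNorm (n + 1) 1 (mikadoTheta n ((n : ℝ) / p) μ Φ j) ≤ M * μ ^ (-γ) ∧
      (∫ x in cube (n + 1), ‖mikadoW n ((n : ℝ) / (p / (p - 1))) μ Φ j x‖) ≤ M * μ ^ (-γ) ∧
      (∫ x in cube (n + 1), ‖mikadoW n ((n : ℝ) / (p / (p - 1))) μ Φ j x‖ ^ pt) ^ (1 / pt) +
        (∫ x in cube (n + 1),
            ‖fderiv ℝ (mikadoW n ((n : ℝ) / (p / (p - 1))) μ Φ j) x‖ ^ pt) ^ (1 / pt) ≤
        M * μ ^ (-γ) := by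
  have hp0 : (0:ℝ) < p := lt_trans one_pos hp
  have hpt0 : (0:ℝ) < pt := lt_of_lt_of_le one_pos hpt
  have hn0 : (0:ℝ) < n := by
    have : (2:ℝ) ≤ n := by exact_mod_cast hn
    linarith
  set e : ℝ := (n : ℝ) / (p / (p - 1)) with hedef
  have he : e = (n : ℝ) - n / p := by
    rw [hedef]
    field_simp
  -- the exponents
  set γ1 : ℝ := (n:ℝ) - n / p with hγ1def
  set γ2 : ℝ := (n:ℝ) / p with hγ2def
  set γ3 : ℝ := (n:ℝ) / pt - e - 1 with hγ3def
  have hγ1 : 0 < γ1 := by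
    have : (n:ℝ) / p < n := div_lt_self hn0 hp
    simp only [hγ1def]; linarith
  have hγ2 : 0 < γ2 := by positivity
  have hγ3 : 0 < γ3 := by
    have h := (mul_lt_mul_iff_right₀ hn0).2 hcond
    rw [mul_add, mul_add, mul_one_div, mul_one_div, mul_one, mul_one_div,
      div_self hn0.ne'] at h
    simp only [hγ3def, he]
    linarith
  set γ : ℝ := min γ1 (min γ2 γ3) with hγdef
  have hγ : 0 < γ := lt_min hγ1 (lt_min hγ2 hγ3)
  have hγle1 : γ ≤ γ1 := min_le_left _ _
  have hγle2 : γ ≤ γ2 := le_trans (min_le_right _ _) (min_le_left _ _)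
  have hγle3 : γ ≤ γ3 := le_trans (min_le_right _ _) (min_le_right _ _)
  -- the base functions
  set ψ := fderiv ℝ Φ with hψdef
  have hψcont : Continuous ψ := hΦ.continuous_fderiv (by simp)
  have hψc : HasCompactSupport ψ := HasCompactSupport.fderiv (𝕜 := ℝ) hΦc
  have hF1 : Continuous (fun y : Vec n => |Φ y|) := hΦ.continuous.abs
  have hF1c : HasCompactSupport (fun y : Vec n => |Φ y|) := hΦc.abs
  have hF2 : Continuous (fun y : Vec n => |Φ y| ^ pt) :=
    hF1.rpow_const fun y => Or.inr hpt0.le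
  have hF2c : HasCompactSupport (fun y : Vec n => |Φ y| ^ pt) :=
    hF1c.comp_left (g := fun t : ℝ => t ^ pt) (Real.zero_rpow hpt0.ne')
  have hF3 : Continuous (fun y : Vec n => ‖ψ y‖ ^ pt) :=
    hψcont.norm.rpow_const fun y => Or.inr hpt0.le
  have hF3c : HasCompactSupport (fun y : Vec n => ‖ψ y‖ ^ pt) :=
    (hψc.norm).comp_left (g := fun t : ℝ => t ^ pt) (Real.zero_rpow hpt0.ne')
  -- constants
  set C1 : ℝ := ∫ y : Vec n, |Φ y| with hC1def
  set C2 : ℝ := ∫ y : Vec n, |Φ y| ^ pt with hC2def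
  set C3 : ℝ := ∫ y : Vec n, ‖ψ y‖ ^ pt with hC3def
  have hC1nn : 0 ≤ C1 := integral_nonneg fun y => abs_nonneg _
  have hC2nn : 0 ≤ C2 := integral_nonneg fun y => Real.rpow_nonneg (abs_nonneg _) _
  have hC3nn : 0 ≤ C3 := integral_nonneg fun y => Real.rpow_nonneg (norm_nonneg _) _
  set M : ℝ := 1 + C1 + C2 ^ (1/pt) + C3 ^ (1/pt) with hMdef
  have hC2p : 0 ≤ C2 ^ (1/pt) := Real.rpow_nonneg hC2nn _
  have hC3p : 0 ≤ C3 ^ (1/pt) := Real.rpow_nonneg hC3nn _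
  have hM : 0 < M := by simp only [hMdef]; linarith
  refine ⟨γ, hγ, M, hM, fun μ hμ1 j => ?_⟩
  have hμ0 : (0:ℝ) < μ := lt_of_lt_of_le one_pos hμ1
  -- the fract-removal identity on the cube
  have harg : ∀ x ∈ cube (n+1),
      (fun i : Fin n => μ * Int.fract (x (j.succAbove i)))
        = (μ • fun i : Fin n => x (j.succAbove i)) := by
    intro x hx
    funext i
    have h := mem_cube hx (j.succAbove i)
    simp [Int.fract_eq_self.2 ⟨h.1, h.2⟩]
  -- (I) the Θ bound
  have hTheta : lpNorm (n + 1) 1 (mikadoTheta n ((n : ℝ) / p) μ Φ j) ≤ M * μ ^ (-γ) := by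
    have hlp : lpNorm (n + 1) 1 (mikadoTheta n ((n : ℝ) / p) μ Φ j)
        = ∫ x in cube (n+1), |mikadoTheta n ((n : ℝ) / p) μ Φ j x| := by
      unfold _root_.lpNorm
      norm_num
    rw [hlp]
    refine final_bound ((n:ℝ)/p + -(n:ℝ)) hμ1 ?_ hC1nn (by simp only [hMdef]; linarith) ?_
    · simp only [hγ1def] at hγle1
      linarith
    · have hI := cube_integral_le n j hF1 hF1c (fun y => abs_nonneg _) hμ0
        (Real.rpow_nonneg hμ0.le ((n:ℝ)/p))
        (f := fun x => |mikadoTheta n ((n : ℝ) / p) μ Φ j x|) ?_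
      · calc ∫ x in cube (n+1), |mikadoTheta n ((n : ℝ) / p) μ Φ j x|
            ≤ μ ^ ((n:ℝ)/p) * (μ ^ (-(n:ℝ)) * C1) := hI
          _ = μ ^ ((n:ℝ)/p + -(n:ℝ)) * C1 := by
              rw [Real.rpow_add hμ0]; ring
      · intro x hx
        show |mikadoTheta n ((n : ℝ) / p) μ Φ j x|
          = μ ^ ((n:ℝ)/p) * |Φ (μ • fun i => x (j.succAbove i))|
        simp only [mikadoTheta]
        rw [harg x hx, abs_mul, abs_of_nonneg (Real.rpow_nonneg hμ0.le _)]
  -- (II) the W L¹ bound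
  have hWnorm : ∀ x ∈ cube (n+1),
      ‖mikadoW n e μ Φ j x‖ = μ ^ e * |Φ (μ • fun i : Fin n => x (j.succAbove i))| := by
    intro x hx
    rw [mikadoW, harg x hx, Pi.norm_single, Real.norm_eq_abs, abs_mul,
      abs_of_nonneg (Real.rpow_nonneg hμ0.le _)]
  have hWL1 : (∫ x in cube (n + 1), ‖mikadoW n e μ Φ j x‖) ≤ M * μ ^ (-γ) := by
    refine final_bound (e + -(n:ℝ)) hμ1 ?_ hC1nn (by simp only [hMdef]; linarith) ?_
    · rw [he]
      simp only [hγ2def] at hγle2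
      linarith
    · have hI := cube_integral_le n j hF1 hF1c (fun y => abs_nonneg _) hμ0
        (Real.rpow_nonneg hμ0.le e) (f := fun x => ‖mikadoW n e μ Φ j x‖) hWnorm
      calc ∫ x in cube (n+1), ‖mikadoW n e μ Φ j x‖
          ≤ μ ^ e * (μ ^ (-(n:ℝ)) * C1) := hI
        _ = μ ^ (e + -(n:ℝ)) * C1 := by rw [Real.rpow_add hμ0]; ring
  -- (III) the W^{1,pt} bound
  have hW1pt : (∫ x in cube (n + 1), ‖mikadoW n e μ Φ j x‖ ^ pt) ^ (1 / pt) +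
      (∫ x in cube (n + 1), ‖fderiv ℝ (mikadoW n e μ Φ j) x‖ ^ pt) ^ (1 / pt) ≤
      M * μ ^ (-γ) := by
    -- first term
    have hI1 : ∫ x in cube (n + 1), ‖mikadoW n e μ Φ j x‖ ^ pt
        ≤ μ ^ (e * pt + -(n:ℝ)) * C2 := by
      have hI := cube_integral_le n j hF2 hF2c
        (fun y => Real.rpow_nonneg (abs_nonneg _) _) hμ0
        (Real.rpow_nonneg hμ0.le (e * pt))
        (f := fun x => ‖mikadoW n e μ Φ j x‖ ^ pt) ?_
      · calc ∫ x in cube (n+1), ‖mikadoW n e μ Φ j x‖ ^ pt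
            ≤ μ ^ (e * pt) * (μ ^ (-(n:ℝ)) * C2) := hI
          _ = μ ^ (e * pt + -(n:ℝ)) * C2 := by
              rw [Real.rpow_add hμ0]; exact (mul_assoc _ _ _).symm
      · intro x hx
        show ‖mikadoW n e μ Φ j x‖ ^ pt
          = μ ^ (e * pt) * |Φ (μ • fun i => x (j.succAbove i))| ^ pt
        rw [hWnorm x hx,
          Real.mul_rpow (Real.rpow_nonneg hμ0.le _) (abs_nonneg _), ← Real.rpow_mul hμ0.le]
    have hI10 : 0 ≤ ∫ x in cube (n + 1), ‖mikadoW n e μ Φ j x‖ ^ pt :=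
      setIntegral_nonneg (measurableSet_cube _)
        fun x _ => Real.rpow_nonneg (norm_nonneg _) _
    have ht1 : (∫ x in cube (n + 1), ‖mikadoW n e μ Φ j x‖ ^ pt) ^ (1/pt)
        ≤ μ ^ ((e * pt + -(n:ℝ)) * (1/pt)) * C2 ^ (1/pt) :=
      rpow_term_bound hpt0 hμ0 hC2nn hI10 hI1
    -- second term
    have hI2 : ∫ x in cube (n + 1), ‖fderiv ℝ (mikadoW n e μ Φ j) x‖ ^ pt
        ≤ μ ^ ((e + 1) * pt + -(n:ℝ)) * C3 := by
      obtain ⟨Cb, hCb⟩ := hψc.exists_bound_of_continuous hψcont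
      have hCb0 : 0 ≤ Cb := le_trans (norm_nonneg _) (hCb (0 : Vec n))
      have hg : ∫ x in cube (n+1),
          μ ^ ((e+1) * pt) * (fun y : Vec n => ‖ψ y‖ ^ pt) (μ • fun i => x (j.succAbove i))
          ≤ μ ^ ((e+1) * pt) * (μ ^ (-(n:ℝ)) * C3) :=
        cube_integral_le n j hF3 hF3c (fun y => Real.rpow_nonneg (norm_nonneg _) _) hμ0
          (Real.rpow_nonneg hμ0.le _) (fun x _ => rfl)
      have hmono : ∫ x in cube (n + 1), ‖fderiv ℝ (mikadoW n e μ Φ j) x‖ ^ pt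
          ≤ ∫ x in cube (n+1),
            μ ^ ((e+1) * pt) * (fun y : Vec n => ‖ψ y‖ ^ pt) (μ • fun i => x (j.succAbove i)) := by
        refine integral_mono_of_nonneg
          (Filter.Eventually.of_forall fun x => Real.rpow_nonneg (norm_nonneg _) _) ?_ ?_
        · refine integrableOn_cube_s13
            (continuous_const.mul (hF3.comp
              ((continuous_pi fun i => continuous_apply (j.succAbove i)).const_smul μ)))
            (μ ^ ((e+1) * pt) * Cb ^ pt) fun x => ?_
          have h1 : (0:ℝ) ≤ ‖ψ (μ • fun i => x (j.succAbove i))‖ ^ pt :=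
            Real.rpow_nonneg (norm_nonneg _) _
          have h2 : ‖ψ (μ • fun i => x (j.succAbove i))‖ ^ pt ≤ Cb ^ pt :=
            Real.rpow_le_rpow (norm_nonneg _) (hCb _) hpt0.le
          rw [abs_of_nonneg (mul_nonneg (Real.rpow_nonneg hμ0.le _) h1)]
          exact mul_le_mul_of_nonneg_left h2 (Real.rpow_nonneg hμ0.le _)
        · have hae : ∀ᵐ x ∂(volume.restrict (cube (n+1))),
              ∀ i : Fin n, Int.fract (x (j.succAbove i)) ≠ 0 :=
            (ae_good n j).filter_mono (MeasureTheory.ae_mono Measure.restrict_le_self)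
          have hmem : ∀ᵐ x ∂(volume.restrict (cube (n+1))), x ∈ cube (n+1) :=
            ae_restrict_mem (measurableSet_cube _)
          filter_upwards [hae, hmem] with x hgood hx
          have hb := norm_fderiv_mikadoW_le n e hμ0 Φ hΦ j hgood
          rw [harg x hx] at hb
          calc ‖fderiv ℝ (mikadoW n e μ Φ j) x‖ ^ pt
              ≤ (μ ^ e * μ * ‖ψ (μ • fun i => x (j.succAbove i))‖) ^ pt :=
                Real.rpow_le_rpow (norm_nonneg _) hb hpt0.le
            _ = μ ^ ((e+1) * pt) *
                (fun y : Vec n => ‖ψ y‖ ^ pt) (μ • fun i => x (j.succAbove i)) := by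
                rw [← Real.rpow_add_one hμ0.ne' e,
                  Real.mul_rpow (Real.rpow_nonneg hμ0.le _) (norm_nonneg _),
                  ← Real.rpow_mul hμ0.le]
      calc ∫ x in cube (n + 1), ‖fderiv ℝ (mikadoW n e μ Φ j) x‖ ^ pt
          ≤ μ ^ ((e+1) * pt) * (μ ^ (-(n:ℝ)) * C3) := le_trans hmono hg
        _ = μ ^ ((e + 1) * pt + -(n:ℝ)) * C3 := by
            rw [Real.rpow_add hμ0]; exact (mul_assoc _ _ _).symm
    have hI20 : 0 ≤ ∫ x in cube (n + 1), ‖fderiv ℝ (mikadoW n e μ Φ j) x‖ ^ pt :=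
      setIntegral_nonneg (measurableSet_cube _)
        fun x _ => Real.rpow_nonneg (norm_nonneg _) _
    have ht2 : (∫ x in cube (n + 1), ‖fderiv ℝ (mikadoW n e μ Φ j) x‖ ^ pt) ^ (1/pt)
        ≤ μ ^ (((e + 1) * pt + -(n:ℝ)) * (1/pt)) * C3 ^ (1/pt) :=
      rpow_term_bound hpt0 hμ0 hC3nn hI20 hI2
    -- exponents
    have hs1 : (e * pt + -(n:ℝ)) * (1/pt) ≤ -γ := by
      have : (e * pt + -(n:ℝ)) * (1/pt) = e - (n:ℝ)/pt := by
        field_simp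
        ring
      rw [this]
      simp only [hγ3def] at hγle3
      linarith
    have hs2 : ((e + 1) * pt + -(n:ℝ)) * (1/pt) ≤ -γ := by
      have : ((e + 1) * pt + -(n:ℝ)) * (1/pt) = e + 1 - (n:ℝ)/pt := by
        field_simp
        ring
      rw [this]
      simp only [hγ3def] at hγle3
      linarith
    have hmono1 : μ ^ ((e * pt + -(n:ℝ)) * (1/pt)) ≤ μ ^ (-γ) :=
      Real.rpow_le_rpow_of_exponent_le hμ1 hs1
    have hmono2 : μ ^ (((e + 1) * pt + -(n:ℝ)) * (1/pt)) ≤ μ ^ (-γ) :=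
      Real.rpow_le_rpow_of_exponent_le hμ1 hs2
    have hγnn : 0 ≤ μ ^ (-γ) := Real.rpow_nonneg hμ0.le _
    calc (∫ x in cube (n + 1), ‖mikadoW n e μ Φ j x‖ ^ pt) ^ (1 / pt) +
        (∫ x in cube (n + 1), ‖fderiv ℝ (mikadoW n e μ Φ j) x‖ ^ pt) ^ (1 / pt)
        ≤ μ ^ (-γ) * C2 ^ (1/pt) + μ ^ (-γ) * C3 ^ (1/pt) := by
          have a1 := le_trans ht1 (mul_le_mul_of_nonneg_right hmono1 hC2p)
          have a2 := le_trans ht2 (mul_le_mul_of_nonneg_right hmono2 hC3p)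
          linarith
      _ = (C2 ^ (1/pt) + C3 ^ (1/pt)) * μ ^ (-γ) := by ring
      _ ≤ M * μ ^ (-γ) := by
          refine mul_le_mul_of_nonneg_right ?_ hγnn
          simp only [hMdef]; linarith
  exact ⟨hTheta, hWL1, hW1pt⟩
end
end
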